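/- arXiv:1410.3405 — 5 statements merged into one kernel-verified Lean document; each statement's English description precedes it below -/
import Mathlib

section
/- Let G be a graph on n vertices whose connected components have orders n₁ ≤ n₂ ≤ … ≤ n_ξ, and suppose every nontrivial component of G has at least 2 vertices, G has at least j+2 components (ξ ≥ j+2), and j+1 ≤ n/2 − j (e.g. n sufficiently large relative to j). Then some nonempty collection of components of G contains in total s vertices with j+1 ≤ s ≤ n/2. -/
/-- If a graph `G` on `n` vertices has at least `j+2` connected components
and `n ≥ 2(j+1) + 2j`, then some nonempty collection of components contains `s` vertices
in total with `j+1 ≤ s ≤ n/2`. -/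
theorem exists_component_collection
    {V : Type*} [Fintype V] {G : SimpleGraph V} [Fintype G.ConnectedComponent]
    (n j : ℕ) (hV : Fintype.card V = n)
    (hξ : j + 2 ≤ Fintype.card G.ConnectedComponent)
    (hn : 2 * (j + 1) + 2 * j ≤ n) :
    ∃ S : Finset G.ConnectedComponent, S.Nonempty ∧
      j + 1 ≤ ∑ C ∈ S, Nat.card C.supp ∧
      2 * (∑ C ∈ S, Nat.card C.supp) ≤ n := by
  classical
  set f : G.ConnectedComponent → ℕ := fun C => Nat.card C.supp with hf
  have hfc : ∀ C : G.ConnectedComponent,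
      f C = (Finset.univ.filter (fun v => G.connectedComponentMk v = C)).card := by
    intro C
    calc f C = Fintype.card {v // G.connectedComponentMk v = C} := by
          show Nat.card C.supp = _
          rw [Nat.card_eq_fintype_card]
          exact Fintype.card_congr
            (Equiv.subtypeEquivRight fun v => SimpleGraph.ConnectedComponent.mem_supp_iff _ _)
      _ = _ := Fintype.card_subtype _
  have hsum : ∑ C : G.ConnectedComponent, f C = n := by
    rw [← hV, ← Finset.card_univ,
      Finset.card_eq_sum_card_fiberwise (f := fun v => G.connectedComponentMk v)
        (t := Finset.univ) (fun v _ => Finset.mem_univ _)]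
    exact Finset.sum_congr rfl (fun C _ => hfc C)
  have hpos : ∀ C : G.ConnectedComponent, 1 ≤ f C := by
    intro C
    obtain ⟨v, hv⟩ := C.exists_rep
    rw [hfc]
    refine Finset.card_pos.mpr ⟨v, ?_⟩
    exact Finset.mem_filter.mpr ⟨Finset.mem_univ _, hv⟩
  -- pick a subset with minimal sum among those with sum ≥ j+1
  have hex : ∃ s : ℕ, ∃ S : Finset G.ConnectedComponent,
      (∑ C ∈ S, f C = s) ∧ j + 1 ≤ s := ⟨n, Finset.univ, hsum, by omega⟩
  obtain ⟨S, hSsum, hjs⟩ := Nat.find_spec hex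
  have hSle : ∑ C ∈ S, f C ≤ n := by
    rw [← hsum]; exact Finset.sum_le_sum_of_subset (Finset.subset_univ S)
  have hne : S.Nonempty := by
    rcases S.eq_empty_or_nonempty with h | h
    · exfalso; rw [h, Finset.sum_empty] at hSsum; omega
    · exact h
  have hgoal : (∑ C ∈ S, Nat.card C.supp) = Nat.find hex := hSsum
  refine ⟨S, hne, ?_, ?_⟩
  · rw [hgoal]; exact hjs
  rw [hgoal]
  rcases eq_or_lt_of_le (Finset.one_le_card.mpr hne) with hcard | hcard
  · -- |S| = 1 : use complement
    have hcompl : ∑ C ∈ Sᶜ, f C = n - Nat.find hex := by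
      have := Finset.sum_add_sum_compl S f
      omega
    have hcardcompl : j + 1 ≤ Sᶜ.card := by
      have := Finset.card_add_card_compl S
      omega
    have hcomplge : j + 1 ≤ ∑ C ∈ Sᶜ, f C := by
      calc j + 1 ≤ Sᶜ.card := hcardcompl
        _ = ∑ C ∈ Sᶜ, 1 := by simp
        _ ≤ ∑ C ∈ Sᶜ, f C := Finset.sum_le_sum (fun C _ => hpos C)
    have : Nat.find hex ≤ n - Nat.find hex := Nat.find_min' hex ⟨Sᶜ, hcompl, by omega⟩
    omega
  · -- |S| ≥ 2
    have hlow : ∀ C ∈ S, Nat.find hex ≤ j + f C := by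
      intro C hC
      by_contra hlt
      push_neg at hlt
      have herase : f C + ∑ D ∈ S.erase C, f D = Nat.find hex := by
        rw [Finset.add_sum_erase S f hC]; exact hSsum
      have h1 : ∑ D ∈ S.erase C, f D < Nat.find hex := by have := hpos C; omega
      exact Nat.find_min hex h1 ⟨S.erase C, rfl, by omega⟩
    have hbig : S.card * (Nat.find hex - j) ≤ Nat.find hex := by
      calc S.card * (Nat.find hex - j) = ∑ _C ∈ S, (Nat.find hex - j) := by
            rw [Finset.sum_const, smul_eq_mul]
        _ ≤ ∑ C ∈ S, f C := Finset.sum_le_sum (fun C hC => by have := hlow C hC; omega)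
        _ = Nat.find hex := hSsum
    have h2 : 2 * (Nat.find hex - j) ≤ Nat.find hex := le_trans (Nat.mul_le_mul_right _ hcard) hbig
    omega
end

section
/- Fix an integer k ≥ 1 and a real number c. Suppose each of m = ⌈(n/k)(log n + c)⌉ independent trials selects a uniformly random k-element subset of a set W of n−1 colours. Then the probability that every colour of W appears in at least one selected subset tends to exp(−exp(−c)) as n → ∞. -/
open Finset Filter Real

/-! ### Auxiliary lemmas for the coupon–collector theorem -/

lemma cc_count_cover (N k m : ℕ) :
    (Nat.card {f : Fin m → {s : Finset ℕ // s ⊆ Finset.range N ∧ s.card = k} //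
        ∀ w ∈ Finset.range N, ∃ t, w ∈ (f t).1} : ℝ)
      = ∑ j ∈ Finset.range (N + 1),
          (-1 : ℝ) ^ j * (N.choose j) * (((N - j).choose k : ℝ)) ^ m := by
  classical
  set W : Finset ℕ := Finset.range N with hW
  set B : Finset (Finset ℕ) := Finset.powersetCard k W with hB
  set P : Finset (Fin m → Finset ℕ) := Fintype.piFinset (fun _ => B) with hP
  set F : Finset (Fin m → Finset ℕ) := P.filter (fun g => ∀ w ∈ W, ∃ t, w ∈ g t) with hF
  have hcard : Nat.card {f : Fin m → {s : Finset ℕ // s ⊆ W ∧ s.card = k} //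
      ∀ w ∈ W, ∃ t, w ∈ (f t).1} = F.card := by
    rw [← Nat.card_eq_finsetCard]
    refine Nat.card_congr ⟨fun fp => ⟨fun t => (fp.1 t).1, ?_⟩,
      fun gp => ⟨fun t => ⟨gp.1 t, ?_⟩, ?_⟩, fun _ => rfl, fun _ => rfl⟩
    · obtain ⟨f, hf⟩ := fp
      simp only [hF, Finset.mem_filter, hP, Fintype.mem_piFinset]
      exact ⟨fun t => by simp [hB, Finset.mem_powersetCard, (f t).2.1, (f t).2.2], hf⟩
    · have := gp.2
      simp only [hF, Finset.mem_filter, hP, Fintype.mem_piFinset, hB,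
        Finset.mem_powersetCard] at this
      exact (this.1 t)
    · have := gp.2
      simp only [hF, Finset.mem_filter] at this
      exact this.2
  rw [hcard]
  have h1 : (F.card : ℝ) = ∑ g ∈ P, (if ∀ w ∈ W, ∃ t, w ∈ g t then (1 : ℝ) else 0) := by
    rw [hF, Finset.card_filter]
    push_cast
    rfl
  set Missed : (Fin m → Finset ℕ) → Finset ℕ := fun g => W.filter (fun w => ∀ t, w ∉ g t)
    with hM
  have h2 : ∀ g, (if ∀ w ∈ W, ∃ t, w ∈ g t then (1 : ℝ) else 0)
      = ∑ J ∈ W.powerset, (if J ⊆ Missed g then (-1 : ℝ) ^ J.card else 0) := by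
    intro g
    have hfil : W.powerset.filter (fun J => J ⊆ Missed g) = (Missed g).powerset := by
      ext J
      simp only [Finset.mem_filter, Finset.mem_powerset]
      exact ⟨fun h => h.2, fun h => ⟨h.trans (Finset.filter_subset _ _), h⟩⟩
    rw [← Finset.sum_filter, hfil]
    have hZ := Finset.sum_powerset_neg_one_pow_card (x := Missed g)
    have hR : (∑ J ∈ (Missed g).powerset, (-1 : ℝ) ^ J.card)
        = if Missed g = ∅ then 1 else 0 := by
      have := congrArg (fun z : ℤ => (z : ℝ)) hZ
      push_cast at this
      simpa using this
    rw [hR]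
    have hiff : (Missed g = ∅) ↔ (∀ w ∈ W, ∃ t, w ∈ g t) := by
      rw [hM]
      simp only [Finset.filter_eq_empty_iff]
      push_neg
      simp [not_forall, not_not]
    simp [hiff]
  have h3 : ∀ J ∈ W.powerset,
      P.filter (fun g => J ⊆ Missed g)
        = Fintype.piFinset (fun _ : Fin m => Finset.powersetCard k (W \ J)) := by
    intro J hJ
    rw [Finset.mem_powerset] at hJ
    ext g
    simp only [Finset.mem_filter, hP, Fintype.mem_piFinset, hB, Finset.mem_powersetCard]
    constructor
    · rintro ⟨hg, hmiss⟩
      refine fun t => ⟨fun w hw => Finset.mem_sdiff.2 ⟨(hg t).1 hw, fun hwJ => ?_⟩, (hg t).2⟩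
      have := hmiss hwJ
      rw [hM, Finset.mem_filter] at this
      exact this.2 t hw
    · intro h
      refine ⟨fun t => ⟨fun w hw => (Finset.mem_sdiff.1 ((h t).1 hw)).1, (h t).2⟩,
        fun w hwJ => ?_⟩
      rw [hM, Finset.mem_filter]
      exact ⟨hJ hwJ, fun t hwg => (Finset.mem_sdiff.1 ((h t).1 hwg)).2 hwJ⟩
  have h4 : (F.card : ℝ) = ∑ J ∈ W.powerset,
      (-1 : ℝ) ^ J.card * (((N - J.card).choose k : ℝ)) ^ m := by
    rw [h1]
    simp_rw [h2]
    rw [Finset.sum_comm]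
    refine Finset.sum_congr rfl fun J hJ => ?_
    rw [← Finset.sum_filter, Finset.sum_const, h3 J hJ, Fintype.card_piFinset]
    have hJW := Finset.mem_powerset.1 hJ
    rw [Finset.card_powersetCard, Finset.card_sdiff_of_subset hJW]
    simp only [Finset.prod_const, Finset.card_univ, Fintype.card_fin]
    rw [hW, Finset.card_range]
    push_cast
    ring
  rw [h4]
  have h5 := Finset.sum_powerset_apply_card
    (f := fun j => (-1 : ℝ) ^ j * (((N - j).choose k : ℝ)) ^ m) (x := W)
  rw [h5, hW, Finset.card_range]
  refine Finset.sum_congr rfl fun j _ => ?_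
  rw [nsmul_eq_mul]
  ring

/-! ### Basic limits -/

lemma cc_tendsto_sub_atTop (b : ℝ) : Tendsto (fun n : ℕ => (n : ℝ) - b) atTop atTop := by
  simpa [sub_eq_add_neg] using
    tendsto_atTop_add_const_right atTop (-b) tendsto_natCast_atTop_atTop

lemma ccT3 (b : ℝ) : Tendsto (fun n : ℕ => 1 / ((n : ℝ) - b)) atTop (nhds 0) := by
  simpa [one_div, Pi.inv_def] using (cc_tendsto_sub_atTop b).inv_tendsto_atTop

lemma ccT2 (b : ℝ) : Tendsto (fun n : ℕ => (n : ℝ) / ((n : ℝ) - b)) atTop (nhds 1) := by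
  have h : Tendsto (fun n : ℕ => 1 + b * (1 / ((n : ℝ) - b))) atTop (nhds 1) := by
    simpa using tendsto_const_nhds.add ((ccT3 b).const_mul b)
  refine h.congr' ?_
  filter_upwards [(cc_tendsto_sub_atTop b).eventually_ne_atTop 0] with n hn
  field_simp
  ring

lemma ccT1 (b : ℝ) : Tendsto (fun n : ℕ => Real.log n / ((n : ℝ) - b)) atTop (nhds 0) := by
  have h0 : Tendsto (fun n : ℕ => Real.log n / (n : ℝ)) atTop (nhds 0) :=
    (Real.isLittleO_log_id_atTop.tendsto_div_nhds_zero).comp tendsto_natCast_atTop_atTop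
  have h : Tendsto (fun n : ℕ => (Real.log n / (n : ℝ)) * ((n : ℝ) / ((n : ℝ) - b)))
      atTop (nhds 0) := by simpa using h0.mul (ccT2 b)
  refine h.congr' ?_
  filter_upwards [(cc_tendsto_sub_atTop b).eventually_ne_atTop 0,
    eventually_gt_atTop 0] with n hn hn0
  have : (n : ℝ) ≠ 0 := by positivity
  field_simp

lemma ccT4 (b : ℝ) : Tendsto (fun n : ℕ => ((n : ℝ) - b) / (n : ℝ)) atTop (nhds 1) := by
  have h : Tendsto (fun n : ℕ => 1 - b * (1 / ((n : ℝ) - 0))) atTop (nhds 1) := by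
    simpa using tendsto_const_nhds.sub ((ccT3 0).const_mul b)
  refine h.congr' ?_
  filter_upwards [eventually_gt_atTop 0] with n hn
  have : (n : ℝ) ≠ 0 := by positivity
  field_simp
  ring
lemma cc_lim_aux (k : ℕ) (hk : 1 ≤ k) (c : ℝ) (a j : ℕ) :
    Tendsto (fun n : ℕ => (j : ℝ) * Real.log n
      + (⌈(n : ℝ) / k * (Real.log n + c)⌉₊ : ℝ)
          * (k * Real.log (1 - j / ((n : ℝ) - a))))
      atTop (nhds (-(j * c))) := by
  have hk0 : (k : ℝ) ≠ 0 := by positivity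
  set b : ℝ := (a : ℝ) + j with hb
  have hA : Tendsto (fun n : ℕ => (j : ℝ) * ((-b) * (Real.log n / ((n : ℝ) - b))
      - c * ((n : ℝ) / ((n : ℝ) - b))) - ((j : ℝ) * k) * (1 / ((n : ℝ) - b)))
      atTop (nhds (-(j * c))) := by
    have := ((((ccT1 b).const_mul (-b)).sub ((ccT2 b).const_mul c)).const_mul (j : ℝ)).sub
      (((ccT3 b)).const_mul ((j : ℝ) * k))
    simpa using this
  have hB : Tendsto (fun n : ℕ => (j : ℝ) * ((-(a : ℝ)) * (Real.log n / ((n : ℝ) - a))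
      - c * ((n : ℝ) / ((n : ℝ) - a)))) atTop (nhds (-(j * c))) := by
    have := (((ccT1 a).const_mul (-(a : ℝ))).sub ((ccT2 a).const_mul c)).const_mul (j : ℝ)
    simpa using this
  refine tendsto_of_tendsto_of_tendsto_of_le_of_le' hA hB ?_ ?_
  · -- lower bound
    filter_upwards [tendsto_natCast_atTop_atTop.eventually_ge_atTop ((a : ℝ) + j + 1),
      (Real.tendsto_log_atTop.comp tendsto_natCast_atTop_atTop).eventually_ge_atTop (-c)]
      with n hn1 hn2
    have hc : (0 : ℝ) ≤ Real.log n + c := by simpa using neg_le_iff_add_nonneg.mp hn2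
    set D : ℝ := (n : ℝ) - a with hD
    have hDj : (1 : ℝ) ≤ D - j := by simp only [hD]; push_cast; linarith
    have hD0 : (0 : ℝ) < D := by linarith [Nat.cast_nonneg (α := ℝ) j]
    have hDj0 : (0 : ℝ) < D - j := by linarith
    have h1x : 1 - (j : ℝ) / D = (D - j) / D := by field_simp
    have hx01 : (0 : ℝ) < 1 - (j : ℝ) / D := by rw [h1x]; positivity
    set L : ℝ := Real.log (1 - (j : ℝ) / D) with hL
    have hLlow : -((j : ℝ) / (D - j)) ≤ L := by
      have hinv : (1 - (j : ℝ) / D)⁻¹ = D / (D - j) := by rw [h1x, inv_div]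
      have := Real.log_le_sub_one_of_pos (inv_pos.2 hx01)
      rw [hinv] at this
      have hlog : Real.log ((1 - (j : ℝ) / D)⁻¹) = -L := by rw [Real.log_inv]
      rw [hinv] at hlog
      have heq : D / (D - j) - 1 = (j : ℝ) / (D - j) := by field_simp; ring
      rw [hlog, heq] at this
      linarith
    have hLup : L ≤ -((j : ℝ) / D) := by
      have h := Real.log_le_sub_one_of_pos hx01
      rw [← hL] at h
      linarith
    have hL0 : L ≤ 0 := by
      have : (0 : ℝ) ≤ (j : ℝ) / D := by positivity
      linarith
    set x : ℝ := (n : ℝ) / k * (Real.log n + c) with hx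
    have hx0 : 0 ≤ x := by
      have : (0:ℝ) ≤ (n : ℝ) / k := by positivity
      exact mul_nonneg this hc
    have hm_low : x ≤ (⌈x⌉₊ : ℝ) := Nat.le_ceil x
    have hm_up : (⌈x⌉₊ : ℝ) ≤ x + 1 := (Nat.ceil_lt_add_one hx0).le
    have hkx : x * k = (n : ℝ) * (Real.log n + c) := by rw [hx, div_mul_eq_mul_div, div_mul_cancel₀ _ hk0]
    have hkL0 : (k : ℝ) * L ≤ 0 :=
      mul_nonpos_of_nonneg_of_nonpos (by positivity) hL0
    have key : ((n : ℝ) * (Real.log n + c) + k) * (-((j : ℝ) / (D - j)))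
        ≤ (⌈x⌉₊ : ℝ) * ((k : ℝ) * L) := by
      have h1 : (x + 1) * ((k : ℝ) * L) ≤ (⌈x⌉₊ : ℝ) * ((k : ℝ) * L) :=
        mul_le_mul_of_nonpos_right hm_up hkL0
      have h2 : ((n : ℝ) * (Real.log n + c) + k) * (-((j : ℝ) / (D - j)))
          ≤ ((n : ℝ) * (Real.log n + c) + k) * L := by
        refine mul_le_mul_of_nonneg_left hLlow ?_
        have : (0:ℝ) ≤ (n : ℝ) * (Real.log n + c) := by positivity
        positivity
      have h3 : ((n : ℝ) * (Real.log n + c) + k) * L = (x + 1) * ((k : ℝ) * L) := by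
        rw [← hkx]; ring
      linarith
    have hDne : D - (j : ℝ) ≠ 0 := by linarith
    have hbD : (n : ℝ) - b = D - j := by rw [hb, hD]; ring
    calc (j : ℝ) * ((-b) * (Real.log n / ((n : ℝ) - b))
          - c * ((n : ℝ) / ((n : ℝ) - b))) - ((j : ℝ) * k) * (1 / ((n : ℝ) - b))
        = (j : ℝ) * Real.log n
            + ((n : ℝ) * (Real.log n + c) + k) * (-((j : ℝ) / (D - j))) := by
          rw [hbD]
          field_simp [hb, hD]
          ring
      _ ≤ (j : ℝ) * Real.log n + (⌈x⌉₊ : ℝ) * ((k : ℝ) * L) := by linarith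
  · -- upper bound
    filter_upwards [tendsto_natCast_atTop_atTop.eventually_ge_atTop ((a : ℝ) + j + 1),
      (Real.tendsto_log_atTop.comp tendsto_natCast_atTop_atTop).eventually_ge_atTop (-c)]
      with n hn1 hn2
    have hc : (0 : ℝ) ≤ Real.log n + c := by simpa using neg_le_iff_add_nonneg.mp hn2
    set D : ℝ := (n : ℝ) - a with hD
    have hDj : (1 : ℝ) ≤ D - j := by simp only [hD]; push_cast; linarith
    have hD0 : (0 : ℝ) < D := by linarith [Nat.cast_nonneg (α := ℝ) j]
    have h1x : 1 - (j : ℝ) / D = (D - j) / D := by field_simp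
    have hx01 : (0 : ℝ) < 1 - (j : ℝ) / D := by rw [h1x]; positivity
    set L : ℝ := Real.log (1 - (j : ℝ) / D) with hL
    have hLup : L ≤ -((j : ℝ) / D) := by
      have h := Real.log_le_sub_one_of_pos hx01
      rw [← hL] at h
      linarith
    have hL0 : L ≤ 0 := by
      have : (0 : ℝ) ≤ (j : ℝ) / D := by positivity
      linarith
    set x : ℝ := (n : ℝ) / k * (Real.log n + c) with hx
    have hm_low : x ≤ (⌈x⌉₊ : ℝ) := Nat.le_ceil x
    have hkx : x * k = (n : ℝ) * (Real.log n + c) := by rw [hx, div_mul_eq_mul_div, div_mul_cancel₀ _ hk0]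
    have hkL0 : (k : ℝ) * L ≤ 0 :=
      mul_nonpos_of_nonneg_of_nonpos (by positivity) hL0
    have key : (⌈x⌉₊ : ℝ) * ((k : ℝ) * L)
        ≤ ((n : ℝ) * (Real.log n + c)) * (-((j : ℝ) / D)) := by
      have h1 : (⌈x⌉₊ : ℝ) * ((k : ℝ) * L) ≤ x * ((k : ℝ) * L) :=
        mul_le_mul_of_nonpos_right hm_low hkL0
      have h2 : ((n : ℝ) * (Real.log n + c)) * L
          ≤ ((n : ℝ) * (Real.log n + c)) * (-((j : ℝ) / D)) := by
        refine mul_le_mul_of_nonneg_left hLup ?_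
        positivity
      have h3 : x * ((k : ℝ) * L) = ((n : ℝ) * (Real.log n + c)) * L := by
        rw [← hkx]; ring
      linarith
    have hDne : D ≠ 0 := by positivity
    calc (j : ℝ) * Real.log n + (⌈x⌉₊ : ℝ) * ((k : ℝ) * L)
        ≤ (j : ℝ) * Real.log n + ((n : ℝ) * (Real.log n + c)) * (-((j : ℝ) / D)) := by
          linarith
      _ = (j : ℝ) * ((-(a : ℝ)) * (Real.log n / ((n : ℝ) - a))
          - c * ((n : ℝ) / ((n : ℝ) - a))) := by
          rw [← hD]
          field_simp [hD]
          ring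

/-! ### Binomial coefficient casts and ratio bounds -/

lemma cc_cast_desc : ∀ (j M : ℕ), j ≤ M →
    ((M.descFactorial j : ℕ) : ℝ) = ∏ i ∈ Finset.range j, ((M : ℝ) - i)
  | 0, M, _ => by simp
  | (j+1), M, h => by
    rw [Nat.descFactorial_succ, Finset.prod_range_succ, mul_comm,
      ← cc_cast_desc j M (Nat.le_of_succ_le h)]
    push_cast [Nat.cast_sub (Nat.le_of_succ_le h)]
    ring

lemma cc_cast_choose (M j : ℕ) (h : j ≤ M) :
    ((M.choose j : ℕ) : ℝ) = (∏ i ∈ Finset.range j, ((M : ℝ) - i)) / (j.factorial : ℝ) := by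
  rw [← cc_cast_desc j M h, Nat.descFactorial_eq_factorial_mul_choose]
  push_cast
  rw [mul_comm]
  field_simp

lemma cc_choose_le (M j : ℕ) : ((M.choose j : ℕ) : ℝ) ≤ (M : ℝ) ^ j / (j.factorial : ℝ) := by
  have hfac : (0 : ℝ) < (j.factorial : ℝ) := by positivity
  rw [le_div_iff₀ hfac]
  have h : M.choose j * j.factorial ≤ M ^ j := by
    rw [mul_comm, ← Nat.descFactorial_eq_factorial_mul_choose]
    exact Nat.descFactorial_le_pow M j
  exact_mod_cast h

lemma cc_ratio_prod (k j n : ℕ) (hn : j + k + 1 ≤ n) :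
    (((n - 1 - j).choose k : ℝ) / ((n - 1).choose k : ℝ))
      = ∏ i ∈ Finset.range k, (((n : ℝ) - 1 - j - i) / ((n : ℝ) - 1 - i)) := by
  have hn1 : 1 ≤ n := by omega
  have hNcast : ((n - 1 : ℕ) : ℝ) = (n : ℝ) - 1 := by
    push_cast [Nat.cast_sub hn1]; ring
  have hsub : ((n - 1 - j : ℕ) : ℝ) = (n : ℝ) - 1 - j := by
    have h : n - 1 - j = n - (1 + j) := by omega
    rw [h, Nat.cast_sub (by omega)]
    push_cast; ring
  have hkN : k ≤ n - 1 := by omega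
  have hkNj : k ≤ n - 1 - j := by omega
  rw [cc_cast_choose (n - 1 - j) k hkNj, cc_cast_choose (n - 1) k hkN, hsub, hNcast,
    Finset.prod_div_distrib]
  have hg : (0 : ℝ) < ∏ i ∈ Finset.range k, ((n : ℝ) - 1 - i) := by
    refine Finset.prod_pos fun i hi => ?_
    have h1 : (i : ℝ) < k := by exact_mod_cast Finset.mem_range.1 hi
    have h2 : (j : ℝ) + k + 1 ≤ n := by exact_mod_cast hn
    have h3 : (0 : ℝ) ≤ (j : ℝ) := Nat.cast_nonneg j
    linarith
  have hkf : (k.factorial : ℝ) ≠ 0 := by positivity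
  field_simp

lemma cc_rho_up (k j n : ℕ) (hk : 1 ≤ k) (hn : j + k + 1 ≤ n) :
    (((n - 1 - j).choose k : ℝ) / ((n - 1).choose k : ℝ))
      ≤ (1 - (j : ℝ) / ((n : ℝ) - 1)) ^ k := by
  have hjr : (0 : ℝ) ≤ (j : ℝ) := Nat.cast_nonneg j
  have hnr : (j : ℝ) + k + 1 ≤ (n : ℝ) := by exact_mod_cast hn
  have hkr : (1 : ℝ) ≤ (k : ℝ) := by exact_mod_cast hk
  have hden_pos : ∀ i ∈ Finset.range k, (0 : ℝ) < (n : ℝ) - 1 - i := by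
    intro i hi
    have : (i : ℝ) < k := by exact_mod_cast Finset.mem_range.1 hi
    linarith
  have hnum_nonneg : ∀ i ∈ Finset.range k, (0 : ℝ) ≤ (n : ℝ) - 1 - j - i := by
    intro i hi
    have : (i : ℝ) + 1 ≤ k := by exact_mod_cast Finset.mem_range.1 hi
    linarith
  rw [cc_ratio_prod k j n hn]
  have hconst : (1 - (j : ℝ) / ((n : ℝ) - 1)) = ((n : ℝ) - 1 - j) / ((n : ℝ) - 1) := by
    rw [sub_div, div_self (by linarith : (n : ℝ) - 1 ≠ 0)]
  rw [hconst]
  calc ∏ i ∈ Finset.range k, (((n : ℝ) - 1 - j - i) / ((n : ℝ) - 1 - i))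
      ≤ ∏ _i ∈ Finset.range k, (((n : ℝ) - 1 - j) / ((n : ℝ) - 1)) := by
        refine Finset.prod_le_prod
          (fun i hi => div_nonneg (hnum_nonneg i hi) (hden_pos i hi).le) (fun i hi => ?_)
        rw [div_le_div_iff₀ (hden_pos i hi) (by linarith)]
        have hi0 : (0 : ℝ) ≤ (i : ℝ) := Nat.cast_nonneg i
        nlinarith [mul_nonneg hjr hi0]
    _ = (((n : ℝ) - 1 - j) / ((n : ℝ) - 1)) ^ k := by
        rw [Finset.prod_const, Finset.card_range]

lemma cc_rho_low (k j n : ℕ) (hk : 1 ≤ k) (hn : j + k + 2 ≤ n) :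
    (1 - (j : ℝ) / ((n : ℝ) - k)) ^ k
      ≤ (((n - 1 - j).choose k : ℝ) / ((n - 1).choose k : ℝ)) := by
  have hjr : (0 : ℝ) ≤ (j : ℝ) := Nat.cast_nonneg j
  have hnr : (j : ℝ) + k + 2 ≤ (n : ℝ) := by exact_mod_cast hn
  have hkr : (1 : ℝ) ≤ (k : ℝ) := by exact_mod_cast hk
  have hden_pos : ∀ i ∈ Finset.range k, (0 : ℝ) < (n : ℝ) - 1 - i := by
    intro i hi
    have : (i : ℝ) < k := by exact_mod_cast Finset.mem_range.1 hi
    linarith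
  rw [cc_ratio_prod k j n (by omega)]
  have hconst : (1 - (j : ℝ) / ((n : ℝ) - k)) = ((n : ℝ) - k - j) / ((n : ℝ) - k) := by
    rw [sub_div, div_self (by linarith : (n : ℝ) - k ≠ 0)]
  rw [hconst]
  calc (((n : ℝ) - k - j) / ((n : ℝ) - k)) ^ k
      = ∏ _i ∈ Finset.range k, (((n : ℝ) - k - j) / ((n : ℝ) - k)) := by
        rw [Finset.prod_const, Finset.card_range]
    _ ≤ ∏ i ∈ Finset.range k, (((n : ℝ) - 1 - j - i) / ((n : ℝ) - 1 - i)) := by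
        refine Finset.prod_le_prod
          (fun i hi => div_nonneg (by linarith) (by linarith)) (fun i hi => ?_)
        have hik : (i : ℝ) ≤ (k : ℝ) - 1 := by
          have : (i : ℝ) + 1 ≤ k := by exact_mod_cast Finset.mem_range.1 hi
          linarith
        rw [div_le_div_iff₀ (by linarith) (hden_pos i hi)]
        nlinarith [mul_nonneg hjr (by linarith : (0 : ℝ) ≤ (k : ℝ) - 1 - i)]

set_option maxHeartbeats 1000000 in
lemma cc_sandwich (k j n m : ℕ) (hk : 1 ≤ k) (hn : j + k + 2 ≤ n) :
    ((((n : ℝ) - (1 + j)) ^ j / (j.factorial : ℝ)) *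
        Real.exp ((m : ℝ) * (k * Real.log (1 - j / ((n : ℝ) - k))))
      ≤ ((n - 1).choose j : ℝ) *
          (((n - 1 - j).choose k : ℝ) / ((n - 1).choose k : ℝ)) ^ m)
    ∧ (((n - 1).choose j : ℝ) *
          (((n - 1 - j).choose k : ℝ) / ((n - 1).choose k : ℝ)) ^ m
      ≤ ((n : ℝ) ^ j / (j.factorial : ℝ)) *
          Real.exp ((m : ℝ) * (k * Real.log (1 - j / ((n : ℝ) - 1))))) := by
  have hfac : (0 : ℝ) < (j.factorial : ℝ) := by positivity
  have hn1 : 1 ≤ n := by omega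
  have hNcast : ((n - 1 : ℕ) : ℝ) = (n : ℝ) - 1 := by
    push_cast [Nat.cast_sub hn1]; ring
  have hjN : j ≤ n - 1 := by omega
  have hkr : (k : ℝ) ≥ 1 := by exact_mod_cast hk
  have hjr : (0 : ℝ) ≤ (j : ℝ) := Nat.cast_nonneg j
  have hnr : (j : ℝ) + k + 2 ≤ (n : ℝ) := by exact_mod_cast hn
  have hρ_nonneg : (0 : ℝ) ≤ ((n - 1 - j).choose k : ℝ) / ((n - 1).choose k : ℝ) := by
    positivity
  have hb1 : (0 : ℝ) < 1 - (j : ℝ) / ((n : ℝ) - 1) := by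
    have h1 : (j : ℝ) / ((n : ℝ) - 1) < 1 := by
      rw [div_lt_one (by linarith)]; linarith
    linarith
  have hb2 : (0 : ℝ) < 1 - (j : ℝ) / ((n : ℝ) - k) := by
    have h1 : (j : ℝ) / ((n : ℝ) - k) < 1 := by
      rw [div_lt_one (by linarith)]; linarith
    linarith
  have hρ_up := cc_rho_up k j n hk (by omega)
  have hρ_low := cc_rho_low k j n hk hn
  have hC_up : ((n - 1).choose j : ℝ) ≤ (n : ℝ) ^ j / (j.factorial : ℝ) := by
    rw [cc_cast_choose (n - 1) j hjN, hNcast]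
    refine (div_le_div_iff_of_pos_right hfac).2 ?_
    calc ∏ i ∈ Finset.range j, ((n : ℝ) - 1 - i)
        ≤ ∏ _i ∈ Finset.range j, (n : ℝ) := by
          refine Finset.prod_le_prod (fun i hi => ?_)
            (fun i hi => by linarith [Nat.cast_nonneg (α := ℝ) i])
          have : (i : ℝ) + 1 ≤ j := by exact_mod_cast Finset.mem_range.1 hi
          linarith
      _ = (n : ℝ) ^ j := by rw [Finset.prod_const, Finset.card_range]
  have hC_low : ((n : ℝ) - (1 + j)) ^ j / (j.factorial : ℝ) ≤ ((n - 1).choose j : ℝ) := by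
    rw [cc_cast_choose (n - 1) j hjN, hNcast]
    refine (div_le_div_iff_of_pos_right hfac).2 ?_
    calc ((n : ℝ) - (1 + j)) ^ j
        = ∏ _i ∈ Finset.range j, ((n : ℝ) - (1 + j)) := by
          rw [Finset.prod_const, Finset.card_range]
      _ ≤ ∏ i ∈ Finset.range j, ((n : ℝ) - 1 - i) := by
          refine Finset.prod_le_prod (fun i hi => by linarith) (fun i hi => ?_)
          have : (i : ℝ) + 1 ≤ j := by exact_mod_cast Finset.mem_range.1 hi
          linarith
  have hexp1 : Real.exp ((m : ℝ) * (k * Real.log (1 - j / ((n : ℝ) - 1))))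
      = ((1 - (j : ℝ) / ((n : ℝ) - 1)) ^ k) ^ m := by
    rw [Real.exp_nat_mul, Real.exp_nat_mul, Real.exp_log hb1]
  have hexp2 : Real.exp ((m : ℝ) * (k * Real.log (1 - j / ((n : ℝ) - k))))
      = ((1 - (j : ℝ) / ((n : ℝ) - k)) ^ k) ^ m := by
    rw [Real.exp_nat_mul, Real.exp_nat_mul, Real.exp_log hb2]
  constructor
  · rw [hexp2]
    refine mul_le_mul hC_low (pow_le_pow_left₀ (by positivity) hρ_low m) (by positivity) ?_
    positivity
  · rw [hexp1]
    refine mul_le_mul hC_up (pow_le_pow_left₀ ?_ hρ_up m) ?_ (by positivity)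
    · exact hρ_nonneg
    · exact pow_nonneg hρ_nonneg m
lemma cc_term_lim (k : ℕ) (hk : 1 ≤ k) (c : ℝ) (j : ℕ) :
    Filter.Tendsto (fun n : ℕ =>
      ((n - 1).choose j : ℝ) *
        (((n - 1 - j).choose k : ℝ) / ((n - 1).choose k : ℝ))
          ^ ⌈(n : ℝ) / k * (Real.log n + c)⌉₊)
      atTop (nhds (Real.exp (-(j * c)) / (j.factorial : ℝ))) := by
  set m : ℕ → ℕ := fun n => ⌈(n : ℝ) / k * (Real.log n + c)⌉₊ with hm
  set u : ℕ → ℝ := fun n => ((n : ℝ) ^ j / (j.factorial : ℝ)) *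
    Real.exp ((m n : ℝ) * (k * Real.log (1 - j / ((n : ℝ) - 1)))) with hu
  set l : ℕ → ℝ := fun n => (((n : ℝ) - (1 + j)) ^ j / (j.factorial : ℝ)) *
    Real.exp ((m n : ℝ) * (k * Real.log (1 - j / ((n : ℝ) - k)))) with hl
  have hfac : (0 : ℝ) < (j.factorial : ℝ) := by positivity
  -- limits of the bounds
  have hcore : ∀ a : ℕ, Filter.Tendsto (fun n : ℕ =>
      Real.exp ((j : ℝ) * Real.log n + (m n : ℝ) * (k * Real.log (1 - j / ((n : ℝ) - a))))
        / (j.factorial : ℝ)) atTop (nhds (Real.exp (-(j * c)) / (j.factorial : ℝ))) :=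
    fun a => ((Real.continuous_exp.tendsto _).comp (cc_lim_aux k hk c a j)).div_const _
  have hulim : Filter.Tendsto u atTop (nhds (Real.exp (-(j * c)) / (j.factorial : ℝ))) := by
    refine (hcore 1).congr' ?_
    filter_upwards [eventually_gt_atTop 0] with n hn
    have hn0 : (0 : ℝ) < (n : ℝ) := by positivity
    rw [hu]
    simp only [Nat.cast_one]
    simp only [Real.exp_add, Real.exp_nat_mul, Real.exp_log hn0]
    ring
  have hllim : Filter.Tendsto l atTop (nhds (Real.exp (-(j * c)) / (j.factorial : ℝ))) := by
    have h1 : Filter.Tendsto (fun n : ℕ => (((n : ℝ) - (1 + j)) / n) ^ j) atTop (nhds 1) := by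
      simpa using (ccT4 (1 + (j : ℝ))).pow j
    have h2 := h1.mul (hcore k)
    rw [one_mul] at h2
    refine h2.congr' ?_
    filter_upwards [eventually_gt_atTop 0] with n hn
    have hn0 : (0 : ℝ) < (n : ℝ) := by positivity
    have hnne : (n : ℝ) ≠ 0 := ne_of_gt hn0
    rw [hl]
    simp only [Real.exp_add, Real.exp_nat_mul, Real.exp_log hn0, div_pow]
    field_simp
  refine tendsto_of_tendsto_of_tendsto_of_le_of_le' hllim hulim ?_ ?_
  · filter_upwards [eventually_ge_atTop (j + k + 2)] with n hn
    exact (cc_sandwich k j n (m n) hk hn).1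
  · filter_upwards [eventually_ge_atTop (j + k + 2)] with n hn
    exact (cc_sandwich k j n (m n) hk hn).2

/-- With `m = ⌈(n/k)(log n + c)⌉` independent uniform `k`-subsets of a
colour set of size `n-1`, the probability (here expressed as a counting ratio) that
every colour appears in at least one chosen subset tends to `exp(-exp(-c))` as `n → ∞`. -/
theorem coupon_collector_k_subsets (k : ℕ) (hk : 1 ≤ k) (c : ℝ) :
    Filter.Tendsto (fun n : ℕ =>
      (Nat.card {f : Fin ⌈(n : ℝ) / k * (Real.log n + c)⌉₊ →
          {s : Finset ℕ // s ⊆ Finset.range (n - 1) ∧ s.card = k} //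
          ∀ w ∈ Finset.range (n - 1), ∃ t, w ∈ (f t).1} : ℝ) /
        ((n - 1).choose k : ℝ) ^ ⌈(n : ℝ) / k * (Real.log n + c)⌉₊)
      Filter.atTop (nhds (Real.exp (-Real.exp (-c)))) := by
  classical
  set m : ℕ → ℕ := fun n => ⌈(n : ℝ) / k * (Real.log n + c)⌉₊ with hm
  set f : ℕ → ℕ → ℝ := fun n j => (-1 : ℝ) ^ j * ((n - 1).choose j : ℝ) *
    (((n - 1 - j).choose k : ℝ) / ((n - 1).choose k : ℝ)) ^ m n with hf
  set a : ℕ → ℝ := fun j => (-1 : ℝ) ^ j * (Real.exp (-(j * c)) / (j.factorial : ℝ)) with ha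
  -- termwise limits
  have htend : ∀ j : ℕ, Filter.Tendsto (fun n => f n j) atTop (nhds (a j)) := by
    intro j
    have := (cc_term_lim k hk c j).const_mul ((-1 : ℝ) ^ j)
    refine this.congr fun n => ?_
    rw [hf]
    ring
  -- the dominating bound
  have hbound : ∀ᶠ n in atTop, ∀ j : ℕ, ‖f n j‖ ≤ (Real.exp (-c)) ^ j / (j.factorial : ℝ) := by
    filter_upwards [eventually_ge_atTop (k + 2),
      (Real.tendsto_log_atTop.comp tendsto_natCast_atTop_atTop).eventually_ge_atTop (1 - c)]
      with n hn hlog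
    have hc1 : 1 ≤ Real.log n + c := by
      have : (1 : ℝ) - c ≤ Real.log n := hlog
      linarith
    have hn0 : (0 : ℝ) < (n : ℝ) := by
      have : (0 : ℕ) < n := by omega
      exact_mod_cast this
    have hm1 : 1 ≤ m n := by
      rw [hm]
      refine Nat.ceil_pos.2 ?_
      have h1 : (0 : ℝ) < (n : ℝ) / k := by positivity
      nlinarith
    intro j
    have hρ_nonneg : (0 : ℝ) ≤ ((n - 1 - j).choose k : ℝ) / ((n - 1).choose k : ℝ) := by
      positivity
    have hnorm : ‖f n j‖ = ((n - 1).choose j : ℝ) *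
        (((n - 1 - j).choose k : ℝ) / ((n - 1).choose k : ℝ)) ^ m n := by
      rw [hf]
      simp only [norm_mul, norm_pow, norm_neg, norm_one, one_pow, one_mul,
        Real.norm_natCast]
      rw [Real.norm_of_nonneg hρ_nonneg]
    rw [hnorm]
    by_cases hj : j + k ≤ n - 1
    · -- main estimate
      have hjr : (0 : ℝ) ≤ (j : ℝ) := Nat.cast_nonneg j
      have hN1 : (1 : ℝ) ≤ (n : ℝ) - 1 := by
        have : (2 : ℕ) ≤ n := by omega
        have := (Nat.cast_le (α := ℝ)).2 this
        push_cast at this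
        linarith
      have hjN : (j : ℝ) ≤ (n : ℝ) - 1 - (k : ℝ) + 1 := by
        have : j + k ≤ n - 1 := hj
        have h2 : (j : ℝ) + k ≤ ((n - 1 : ℕ) : ℝ) := by exact_mod_cast this
        have h3 : ((n - 1 : ℕ) : ℝ) = (n : ℝ) - 1 := by
          rw [Nat.cast_sub (by omega)]; norm_num
        rw [h3] at h2
        have hk1 : (1 : ℝ) ≤ (k : ℝ) := by exact_mod_cast hk
        linarith
      -- base bound : ρ ≤ exp(-(j/(n-1)))^k
      have hbase : ((n - 1 - j).choose k : ℝ) / ((n - 1).choose k : ℝ)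
          ≤ Real.exp (-((j : ℝ) / ((n : ℝ) - 1))) ^ k := by
        have hk1 : (1 : ℝ) ≤ (k : ℝ) := by exact_mod_cast hk
        have h1x : (0 : ℝ) ≤ 1 - (j : ℝ) / ((n : ℝ) - 1) := by
          rw [sub_nonneg, div_le_one (by linarith)]
          linarith
        refine (cc_rho_up k j n hk (by omega)).trans
          (pow_le_pow_left₀ h1x ?_ k)
        linarith [Real.add_one_le_exp (-((j : ℝ) / ((n : ℝ) - 1)))]
      have hρm : (((n - 1 - j).choose k : ℝ) / ((n - 1).choose k : ℝ)) ^ m n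
          ≤ Real.exp (-(((k * m n : ℕ) : ℝ) * ((j : ℝ) / ((n : ℝ) - 1)))) := by
        calc (((n - 1 - j).choose k : ℝ) / ((n - 1).choose k : ℝ)) ^ m n
            ≤ (Real.exp (-((j : ℝ) / ((n : ℝ) - 1))) ^ k) ^ m n :=
              pow_le_pow_left₀ hρ_nonneg hbase (m n)
          _ = Real.exp (-(((k * m n : ℕ) : ℝ) * ((j : ℝ) / ((n : ℝ) - 1)))) := by
              rw [← pow_mul, ← Real.exp_nat_mul]
              push_cast
              ring_nf
      -- exponent bound
      have hkm : (n : ℝ) * (Real.log n + c) ≤ ((k * m n : ℕ) : ℝ) := by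
        have h1 : (n : ℝ) / k * (Real.log n + c) ≤ (m n : ℝ) := Nat.le_ceil _
        have hkr : (0 : ℝ) < (k : ℝ) := by exact_mod_cast hk
        push_cast
        calc (n : ℝ) * (Real.log n + c) = (k : ℝ) * ((n : ℝ) / k * (Real.log n + c)) := by
              field_simp
          _ ≤ (k : ℝ) * (m n : ℝ) := by
              exact mul_le_mul_of_nonneg_left h1 hkr.le
      have hexp_bound : Real.exp (-(((k * m n : ℕ) : ℝ) * ((j : ℝ) / ((n : ℝ) - 1))))
          ≤ Real.exp (-((j : ℝ) * (Real.log n + c))) := by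
        rw [Real.exp_le_exp, neg_le_neg_iff]
        have hdiv : (0 : ℝ) ≤ (j : ℝ) / ((n : ℝ) - 1) := by positivity
        calc (j : ℝ) * (Real.log n + c)
            ≤ ((n : ℝ) * (Real.log n + c)) * ((j : ℝ) / ((n : ℝ) - 1)) := by
              rw [mul_div_assoc', le_div_iff₀ (by linarith : (0:ℝ) < (n : ℝ) - 1)]
              nlinarith
          _ ≤ (((k * m n : ℕ) : ℝ)) * ((j : ℝ) / ((n : ℝ) - 1)) :=
              mul_le_mul_of_nonneg_right hkm hdiv
      -- assemble
      have hC := cc_choose_le (n - 1) j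
      have hCn : ((n - 1).choose j : ℝ) ≤ (n : ℝ) ^ j / (j.factorial : ℝ) := by
        refine hC.trans ?_
        have : ((n - 1 : ℕ) : ℝ) ≤ (n : ℝ) := by exact_mod_cast Nat.sub_le n 1
        have hfac : (0 : ℝ) < (j.factorial : ℝ) := by positivity
        exact (div_le_div_iff_of_pos_right hfac).2 (pow_le_pow_left₀ (Nat.cast_nonneg _) this j)
      calc ((n - 1).choose j : ℝ) * (((n - 1 - j).choose k : ℝ) / ((n - 1).choose k : ℝ)) ^ m n
          ≤ ((n : ℝ) ^ j / (j.factorial : ℝ)) * Real.exp (-((j : ℝ) * (Real.log n + c))) := by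
            refine mul_le_mul hCn (hρm.trans hexp_bound) (pow_nonneg hρ_nonneg _) (by positivity)
        _ = (Real.exp (-c)) ^ j / (j.factorial : ℝ) := by
            have : Real.exp (-((j : ℝ) * (Real.log n + c)))
                = ((n : ℝ) ^ j)⁻¹ * Real.exp (-c) ^ j := by
              rw [show -((j : ℝ) * (Real.log n + c))
                  = (j : ℝ) * (-Real.log n) + (j : ℝ) * (-c) by ring,
                Real.exp_add, Real.exp_nat_mul, Real.exp_nat_mul, Real.exp_neg,
                Real.exp_log hn0, ← inv_pow]
            rw [this]
            have hnj : ((n : ℝ) ^ j) ≠ 0 := by positivity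
            field_simp
    · -- degenerate case : the inner binomial coefficient vanishes
      have hlt : n - 1 - j < k := by omega
      have hz : ((n - 1 - j).choose k : ℝ) = 0 := by
        exact_mod_cast congrArg (Nat.cast (R := ℝ)) (Nat.choose_eq_zero_of_lt hlt)
      rw [hz, zero_div, zero_pow (by omega : m n ≠ 0), mul_zero]
      positivity
  -- dominated convergence
  have hdom := tendsto_tsum_of_dominated_convergence
    (Real.summable_pow_div_factorial (Real.exp (-c))) htend hbound
  -- value of the limit sum
  have hsum_a : (∑' j, a j) = Real.exp (-Real.exp (-c)) := by
    have h1 : ∀ j : ℕ, a j = (-Real.exp (-c)) ^ j / (j.factorial : ℝ) := by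
      intro j
      rw [ha]
      simp only
      rw [show -((j : ℝ) * c) = (j : ℝ) * (-c) by ring, Real.exp_nat_mul]
      rw [show (-Real.exp (-c)) ^ j = (-1 : ℝ) ^ j * Real.exp (-c) ^ j by
        rw [← neg_one_mul, mul_pow]]
      ring
    simp_rw [h1]
    have h2 := (NormedSpace.expSeries_div_hasSum_exp (-Real.exp (-c))).tsum_eq
    rw [← Real.exp_eq_exp_ℝ] at h2
    exact h2
  rw [hsum_a] at hdom
  -- identify the counting ratio with the series
  refine hdom.congr' ?_
  filter_upwards [eventually_ge_atTop (k + 2)] with n hn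
  have hNk : k ≤ n - 1 := by omega
  have hCk_pos : (0 : ℝ) < ((n - 1).choose k : ℝ) := by
    exact_mod_cast Nat.choose_pos hNk
  have htsum : (∑' j, f n j) = ∑ j ∈ Finset.range ((n - 1) + 1), f n j := by
    refine tsum_eq_sum ?_
    intro j hj
    rw [Finset.mem_range] at hj
    have : n - 1 < j := by omega
    rw [hf]
    simp [Nat.choose_eq_zero_of_lt this]
  rw [htsum, cc_count_cover (n - 1) k (m n), Finset.sum_div]
  refine Finset.sum_congr rfl fun j _ => ?_
  rw [hf]
  simp only
  rw [div_pow, mul_div_assoc]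
end

section
/- Let M₁ and M₂ be matroids on a common finite ground set E with rank functions r₁ and r₂, and let n ≥ 1. Then there exists a set S ⊆ E with |S| = n − 1 that is independent in both M₁ and M₂ if and only if for every partition E = E₁ ⊔ E₂ one has r₁(E₁) + r₂(E₂) ≥ n − 1. -/
/-- The rank of a set `A` in a matroid `M`: the maximum cardinality of an independent
subset of `A`. -/
noncomputable def matroidRank {α : Type*} (M : Matroid α) (A : Set α) : ℕ :=
  sSup {r | ∃ I ⊆ A, M.Indep I ∧ I.ncard = r}

section RankLemmas

variable {α : Type*} [Fintype α] {M : Matroid α} {A B I S : Set α}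

lemma mrank_bddAbove (M : Matroid α) (A : Set α) :
    BddAbove {r | ∃ I ⊆ A, M.Indep I ∧ I.ncard = r} := by
  refine ⟨Nat.card α, fun r ⟨I, _, _, hI⟩ => ?_⟩
  rw [← hI, ← Set.ncard_univ]
  exact Set.ncard_le_ncard (Set.subset_univ I) Set.finite_univ

lemma mrank_exists (M : Matroid α) (A : Set α) :
    ∃ I ⊆ A, M.Indep I ∧ I.ncard = matroidRank M A :=
  Nat.sSup_mem ⟨0, Set.mem_setOf.mpr ⟨∅, Set.empty_subset A, M.empty_indep, Set.ncard_empty α⟩⟩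
    (mrank_bddAbove M A)

lemma ncard_le_mrank (hI : M.Indep I) (hIA : I ⊆ A) : I.ncard ≤ matroidRank M A :=
  le_csSup (mrank_bddAbove M A) ⟨I, hIA, hI, rfl⟩

lemma mrank_mono (h : A ⊆ B) : matroidRank M A ≤ matroidRank M B := by
  obtain ⟨I, hIA, hind, hcard⟩ := mrank_exists M A
  rw [← hcard]
  exact ncard_le_mrank hind (hIA.trans h)

lemma mrank_eq_of_indep (hI : M.Indep S) : matroidRank M S = S.ncard := by
  refine le_antisymm ?_ (ncard_le_mrank hI subset_rfl)
  obtain ⟨I, hIS, _, hcard⟩ := mrank_exists M S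
  rw [← hcard]
  exact Set.ncard_le_ncard hIS (Set.toFinite S)

lemma indep_of_mrank_eq (h : matroidRank M S = S.ncard) : M.Indep S := by
  obtain ⟨I, hIS, hind, hcard⟩ := mrank_exists M S
  have : I = S := Set.eq_of_subset_of_ncard_le hIS (by omega) (Set.toFinite S)
  rwa [← this]

lemma mrank_empty (M : Matroid α) : matroidRank M (∅ : Set α) = 0 := by
  obtain ⟨I, hIS, _, hcard⟩ := mrank_exists M (∅ : Set α)
  have : I = ∅ := Set.subset_empty_iff.mp hIS
  simp [← hcard, this]

lemma mrank_insert_le (e : α) (A : Set α) :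
    matroidRank M (insert e A) ≤ matroidRank M A + 1 := by
  obtain ⟨I, hIA, hind, hcard⟩ := mrank_exists M (insert e A)
  have h1 : I \ {e} ⊆ A := by
    intro x hx
    rcases hIA hx.1 with h | h
    · exact absurd h hx.2
    · exact h
  have h2 : (I \ {e}).ncard ≤ matroidRank M A :=
    ncard_le_mrank (hind.subset Set.diff_subset) h1
  have h3 : I ⊆ insert e (I \ {e}) := by
    intro x hx
    by_cases hxe : x = e
    · exact hxe ▸ Set.mem_insert _ _
    · exact Set.mem_insert_of_mem _ ⟨hx, hxe⟩
  have h4 : I.ncard ≤ (I \ {e}).ncard + 1 :=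
    (Set.ncard_le_ncard h3 (Set.toFinite _)).trans (Set.ncard_insert_le _ _)
  omega

lemma mrank_eq_of_basis (hE : M.E = Set.univ) (hI : M.IsBasis I A) :
    matroidRank M A = I.ncard := by
  refine le_antisymm ?_ (ncard_le_mrank hI.indep hI.subset)
  obtain ⟨J, hJA, hind, hcard⟩ := mrank_exists M A
  obtain ⟨J', hJ'b, hJJ'⟩ := hind.subset_isBasis_of_subset hJA
    (by rw [hE]; exact Set.subset_univ A)
  have hcc : J'.encard = I.encard := hJ'b.encard_eq_encard hI
  have : J'.ncard = I.ncard := by rw [Set.ncard_def, Set.ncard_def, hcc]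
  rw [← hcard, ← this]
  exact Set.ncard_le_ncard hJJ' (Set.toFinite J')

lemma mrank_submod (hE : M.E = Set.univ) (A B : Set α) :
    matroidRank M (A ∪ B) + matroidRank M (A ∩ B) ≤ matroidRank M A + matroidRank M B := by
  obtain ⟨I, hI⟩ := M.exists_isBasis (A ∩ B) (by rw [hE]; exact Set.subset_univ _)
  obtain ⟨J, hJb, hIJ⟩ := hI.indep.subset_isBasis_of_subset
    (hI.subset.trans (Set.inter_subset_left.trans Set.subset_union_left)) (by rw [hE]; exact Set.subset_univ _)
  rw [mrank_eq_of_basis hE hI, mrank_eq_of_basis hE hJb]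
  have hJsub : J ⊆ A ∪ B := hJb.subset
  have hunion : (J ∩ A) ∪ (J ∩ B) = J := by
    rw [← Set.inter_union_distrib_left]
    exact Set.inter_eq_self_of_subset_left hJsub
  have hie : ((J ∩ A) ∪ (J ∩ B)).ncard + ((J ∩ A) ∩ (J ∩ B)).ncard
      = (J ∩ A).ncard + (J ∩ B).ncard :=
    Set.ncard_union_add_ncard_inter _ _ (Set.toFinite _) (Set.toFinite _)
  have hiI : I ⊆ (J ∩ A) ∩ (J ∩ B) := by
    intro x hx
    exact ⟨⟨hIJ hx, (hI.subset hx).1⟩, hIJ hx, (hI.subset hx).2⟩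
  have h5 : I.ncard ≤ ((J ∩ A) ∩ (J ∩ B)).ncard :=
    Set.ncard_le_ncard hiI (Set.toFinite _)
  have h6 : (J ∩ A).ncard ≤ matroidRank M A :=
    ncard_le_mrank (hJb.indep.subset Set.inter_subset_left) Set.inter_subset_right
  have h7 : (J ∩ B).ncard ≤ matroidRank M B :=
    ncard_le_mrank (hJb.indep.subset Set.inter_subset_left) Set.inter_subset_right
  rw [hunion] at hie
  omega

end RankLemmas

/-- Abstract axioms for a matroid rank function on finsets. -/
structure IsRankFn {α : Type*} [DecidableEq α] (r : Finset α → ℕ) : Prop where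
  empty : r ∅ = 0
  mono : ∀ ⦃A B : Finset α⦄, A ⊆ B → r A ≤ r B
  submod : ∀ A B : Finset α, r (A ∪ B) + r (A ∩ B) ≤ r A + r B
  unit : ∀ (e : α) (A : Finset α), r (insert e A) ≤ r A + 1

namespace IsRankFn

variable {α : Type*} [DecidableEq α] {r : Finset α → ℕ}

lemma singleton_le (h : IsRankFn r) (e : α) : r {e} ≤ 1 := by
  have h1 := h.unit e ∅
  have h2 : (insert e ∅ : Finset α) = {e} := rfl
  rw [h2, h.empty] at h1
  exact h1

lemma insert_pos (h : IsRankFn r) (he : r {e} = 1) (A : Finset α) :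
    1 ≤ r (insert e A) := by
  have := h.mono (Finset.singleton_subset_iff.mpr (Finset.mem_insert_self e A))
  omega

lemma insert_le (h : IsRankFn r) (e : α) (A : Finset α) :
    r (insert e A) ≤ r A + r {e} := by
  have h1 := h.submod A {e}
  have h2 : A ∪ {e} = insert e A := by
    ext x; simp [Finset.mem_union, Finset.mem_insert, or_comm]
  rw [h2] at h1
  omega

lemma contract (h : IsRankFn r) (e : α) (he : r {e} = 1) :
    IsRankFn (fun X : Finset α => r (insert e X) - 1) := by
  constructor
  · show r (insert e ∅) - 1 = 0
    have h2 : (insert e ∅ : Finset α) = {e} := rfl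
    rw [h2, he]
  · intro A B hAB
    exact Nat.sub_le_sub_right (h.mono (Finset.insert_subset_insert e hAB)) 1
  · intro A B
    have h1 := h.submod (insert e A) (insert e B)
    have h2 : insert e A ∪ insert e B = insert e (A ∪ B) := by
      ext x
      simp only [Finset.mem_union, Finset.mem_insert]
      tauto
    have h3 : insert e A ∩ insert e B = insert e (A ∩ B) := by
      ext x
      simp only [Finset.mem_inter, Finset.mem_insert]
      tauto
    rw [h2, h3] at h1
    have p1 := h.insert_pos he (A ∪ B)
    have p2 := h.insert_pos he (A ∩ B)
    show r (insert e (A ∪ B)) - 1 + (r (insert e (A ∩ B)) - 1) ≤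
      (r (insert e A) - 1) + (r (insert e B) - 1)
    omega
  · intro f A
    have h1 := h.unit f (insert e A)
    have h2 : insert e (insert f A) = insert f (insert e A) := Finset.insert_comm e f A
    have p1 := h.insert_pos he A
    simp only [h2]
    omega

end IsRankFn

/-- The hard direction of Edmonds' matroid intersection theorem, in abstract rank-function
form, proved by induction on the ground set using deletion and contraction. -/
lemma edmonds_abstract {α : Type*} [DecidableEq α] :
    ∀ (N : ℕ) (E : Finset α), E.card ≤ N →
    ∀ (r₁ r₂ : Finset α → ℕ), IsRankFn r₁ → IsRankFn r₂ →
    ∀ k : ℕ, (∀ A B : Finset α, A ∪ B = E → Disjoint A B → k ≤ r₁ A + r₂ B) →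
    ∃ S : Finset α, S ⊆ E ∧ S.card = k ∧ r₁ S = k ∧ r₂ S = k := by
  intro N
  induction N with
  | zero =>
    intro E hE r₁ r₂ h₁ h₂ k hmin
    have hE0 : E = ∅ := Finset.card_eq_zero.mp (Nat.le_zero.mp hE)
    have := hmin ∅ ∅ (by simp [hE0]) (Finset.disjoint_empty_left ∅)
    rw [h₁.empty, h₂.empty] at this
    exact ⟨∅, by simp [h₁.empty, h₂.empty]; omega⟩
  | succ N ih =>
    intro E hE r₁ r₂ h₁ h₂ k hmin
    rcases Nat.eq_zero_or_pos k with hk0 | hk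
    · exact ⟨∅, by simp [h₁.empty, h₂.empty, hk0]⟩
    -- E is nonempty
    have hEne : E.Nonempty := by
      by_contra hne
      rw [Finset.not_nonempty_iff_eq_empty] at hne
      have := hmin ∅ ∅ (by simp [hne]) (Finset.disjoint_empty_left ∅)
      rw [h₁.empty, h₂.empty] at this
      omega
    obtain ⟨e, he⟩ := hEne
    set E' := E.erase e with hE'def
    have hE'card : E'.card ≤ N := by
      have hc : E'.card = E.card - 1 := Finset.card_erase_of_mem he
      have hpos : 0 < E.card := Finset.card_pos.mpr ⟨e, he⟩
      omega
    have hE'sub : E' ⊆ E := Finset.erase_subset e E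
    have heE' : e ∉ E' := Finset.notMem_erase e E
    by_cases hdel : ∀ A B : Finset α, A ∪ B = E' → Disjoint A B → k ≤ r₁ A + r₂ B
    · obtain ⟨S, hSE, hrest⟩ := ih E' hE'card r₁ r₂ h₁ h₂ k hdel
      exact ⟨S, hSE.trans hE'sub, hrest⟩
    push_neg at hdel
    obtain ⟨A, B, hAB, hABd, hlt⟩ := hdel
    have heA : e ∉ A := fun h => heE' (hAB ▸ Finset.mem_union_left B h)
    have heB : e ∉ B := fun h => heE' (hAB ▸ Finset.mem_union_right A h)
    -- e is not a loop of either matroid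
    have hne1 : r₁ {e} = 1 := by
      rcases Nat.lt_or_ge (r₁ {e}) 1 with h0 | h1
      · exfalso
        have hu : insert e A ∪ B = E := by
          rw [Finset.insert_union, hAB, hE'def, Finset.insert_erase he]
        have hd : Disjoint (insert e A) B := by
          rw [Finset.insert_eq, Finset.disjoint_union_left]
          exact ⟨Finset.disjoint_singleton_left.mpr heB, hABd⟩
        have := hmin (insert e A) B hu hd
        have := h₁.insert_le e A
        omega
      · exact le_antisymm (h₁.singleton_le e) h1
    have hne2 : r₂ {e} = 1 := by
      rcases Nat.lt_or_ge (r₂ {e}) 1 with h0 | h1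
      · exfalso
        have hu : A ∪ insert e B = E := by
          rw [Finset.union_insert, hAB, hE'def, Finset.insert_erase he]
        have hd : Disjoint A (insert e B) := by
          rw [Finset.insert_eq, Finset.disjoint_union_right]
          exact ⟨Finset.disjoint_singleton_right.mpr heA, hABd⟩
        have := hmin A (insert e B) hu hd
        have := h₂.insert_le e B
        omega
      · exact le_antisymm (h₂.singleton_le e) h1
    -- contraction
    set r₁' := fun X : Finset α => r₁ (insert e X) - 1 with hr₁'
    set r₂' := fun X : Finset α => r₂ (insert e X) - 1 with hr₂'
    have h₁' : IsRankFn r₁' := h₁.contract e hne1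
    have h₂' : IsRankFn r₂' := h₂.contract e hne2
    have hmin' : ∀ A' B' : Finset α, A' ∪ B' = E' → Disjoint A' B' →
        k - 1 ≤ r₁' A' + r₂' B' := by
      intro A' B' hA'B' hd'
      have heA' : e ∉ A' := fun h => heE' (hA'B' ▸ Finset.mem_union_left B' h)
      have heB' : e ∉ B' := fun h => heE' (hA'B' ▸ Finset.mem_union_right A' h)
      -- memberships
      have hmemE : ∀ x, x ∈ E' ↔ x ≠ e ∧ x ∈ E := fun x => Finset.mem_erase
      have hmem1 : ∀ x, x ∈ A ∨ x ∈ B ↔ x ∈ E' := by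
        intro x; rw [← hAB, Finset.mem_union]
      have hmem2 : ∀ x, x ∈ A' ∨ x ∈ B' ↔ x ∈ E' := by
        intro x; rw [← hA'B', Finset.mem_union]
      have hdj : ∀ x, x ∈ A → x ∈ B → False :=
        fun x ha hb => Finset.disjoint_left.mp hABd ha hb
      have hdj' : ∀ x, x ∈ A' → x ∈ B' → False :=
        fun x ha hb => Finset.disjoint_left.mp hd' ha hb
      -- partition 1 : (A ∪ insert e A', B ∩ B')
      have hu1 : (A ∪ insert e A') ∪ (B ∩ B') = E := by
        ext x
        simp only [Finset.mem_union, Finset.mem_insert, Finset.mem_inter]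
        constructor
        · rintro ((h | (h | h)) | ⟨hb, hb'⟩)
          · exact hE'sub ((hmem1 x).mp (Or.inl h))
          · exact h ▸ he
          · exact hE'sub ((hmem2 x).mp (Or.inl h))
          · exact hE'sub ((hmem1 x).mp (Or.inr hb))
        · intro hxE
          by_cases hxe : x = e
          · exact Or.inl (Or.inr (Or.inl hxe))
          · have hxE' : x ∈ E' := (hmemE x).mpr ⟨hxe, hxE⟩
            rcases (hmem1 x).mpr hxE' with h | h
            · exact Or.inl (Or.inl h)
            · rcases (hmem2 x).mpr hxE' with h' | h'
              · exact Or.inl (Or.inr (Or.inr h'))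
              · exact Or.inr ⟨h, h'⟩
      have hd1 : Disjoint (A ∪ insert e A') (B ∩ B') := by
        rw [Finset.disjoint_left]
        intro x hx hxB
        rw [Finset.mem_inter] at hxB
        rcases Finset.mem_union.mp hx with h | h
        · exact hdj x h hxB.1
        · rcases Finset.mem_insert.mp h with h | h
          · exact heB (h ▸ hxB.1)
          · exact hdj' x h hxB.2
      -- partition 2 : (A ∩ A', B ∪ insert e B')
      have hu2 : (A ∩ A') ∪ (B ∪ insert e B') = E := by
        ext x
        simp only [Finset.mem_union, Finset.mem_insert, Finset.mem_inter]
        constructor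
        · rintro (⟨ha, _⟩ | (h | (h | h)))
          · exact hE'sub ((hmem1 x).mp (Or.inl ha))
          · exact hE'sub ((hmem1 x).mp (Or.inr h))
          · exact h ▸ he
          · exact hE'sub ((hmem2 x).mp (Or.inr h))
        · intro hxE
          by_cases hxe : x = e
          · exact Or.inr (Or.inr (Or.inl hxe))
          · have hxE' : x ∈ E' := (hmemE x).mpr ⟨hxe, hxE⟩
            rcases (hmem1 x).mpr hxE' with h | h
            · rcases (hmem2 x).mpr hxE' with h' | h'
              · exact Or.inl ⟨h, h'⟩
              · exact Or.inr (Or.inr (Or.inr h'))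
            · exact Or.inr (Or.inl h)
      have hd2 : Disjoint (A ∩ A') (B ∪ insert e B') := by
        rw [Finset.disjoint_left]
        intro x hx hxB
        rw [Finset.mem_inter] at hx
        rcases Finset.mem_union.mp hxB with h | h
        · exact hdj x hx.1 h
        · rcases Finset.mem_insert.mp h with h | h
          · exact heA (h ▸ hx.1)
          · exact hdj' x hx.2 h
      have key1 := hmin _ _ hu1 hd1
      have key2 := hmin _ _ hu2 hd2
      -- submodularity
      have hs1 := h₁.submod A (insert e A')
      have hs2 := h₂.submod B (insert e B')
      have hi1 : A ∩ insert e A' = A ∩ A' := by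
        ext x
        simp only [Finset.mem_inter, Finset.mem_insert]
        constructor
        · rintro ⟨hxA, hx⟩
          rcases hx with h | h
          · exact absurd (h ▸ hxA) heA
          · exact ⟨hxA, h⟩
        · rintro ⟨hxA, hx⟩; exact ⟨hxA, Or.inr hx⟩
      have hi2 : B ∩ insert e B' = B ∩ B' := by
        ext x
        simp only [Finset.mem_inter, Finset.mem_insert]
        constructor
        · rintro ⟨hxB, hx⟩
          rcases hx with h | h
          · exact absurd (h ▸ hxB) heB
          · exact ⟨hxB, h⟩
        · rintro ⟨hxB, hx⟩; exact ⟨hxB, Or.inr hx⟩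
      rw [hi1] at hs1
      rw [hi2] at hs2
      have hp1 := h₁.insert_pos hne1 A'
      have hp2 := h₂.insert_pos hne2 B'
      simp only [hr₁', hr₂']
      omega
    obtain ⟨I, hIE', hIcard, hI1, hI2⟩ := ih E' hE'card r₁' r₂' h₁' h₂' (k - 1) hmin'
    simp only [hr₁'] at hI1
    simp only [hr₂'] at hI2
    have heI : e ∉ I := fun h => heE' (hIE' h)
    refine ⟨insert e I, ?_, ?_, ?_, ?_⟩
    · exact Finset.insert_subset he (hIE'.trans hE'sub)
    · rw [Finset.card_insert_of_notMem heI, hIcard]; omega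
    · have hp := h₁.insert_pos hne1 I
      omega
    · have hp := h₂.insert_pos hne2 I
      omega

lemma isRankFn_matroid {α : Type*} [Fintype α] [DecidableEq α] (M : Matroid α)
    (hE : M.E = Set.univ) : IsRankFn (fun A : Finset α => matroidRank M ↑A) := by
  constructor
  · simpa using mrank_empty M
  · intro A B hAB
    exact mrank_mono (Finset.coe_subset.mpr hAB)
  · intro A B
    have := mrank_submod hE (↑A : Set α) ↑B
    simpa using this
  · intro e A
    have := mrank_insert_le (M := M) e (↑A : Set α)
    simpa using this

/-- Edmonds' matroid intersection, decision form: For matroids `M₁`, `M₂`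
on a common finite ground set `E = univ` and `n ≥ 1`, there is a common independent set
of size `n - 1` iff for every partition `E = E₁ ⊔ E₂` we have `r₁(E₁) + r₂(E₂) ≥ n - 1`. -/
theorem matroid_intersection_decision
    {α : Type*} [Fintype α] (M₁ M₂ : Matroid α)
    (hE₁ : M₁.E = Set.univ) (hE₂ : M₂.E = Set.univ) (n : ℕ) (hn : 1 ≤ n) :
    (∃ S : Set α, S.ncard = n - 1 ∧ M₁.Indep S ∧ M₂.Indep S) ↔
      (∀ E₁ E₂ : Set α, E₁ ∪ E₂ = Set.univ → Disjoint E₁ E₂ →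
        n - 1 ≤ matroidRank M₁ E₁ + matroidRank M₂ E₂) := by
  classical
  constructor
  · rintro ⟨S, hcard, h1, h2⟩ E₁ E₂ hu hd
    have hsplit : (S ∩ E₁) ∪ (S ∩ E₂) = S := by
      rw [← Set.inter_union_distrib_left, hu, Set.inter_univ]
    have hdisj : Disjoint (S ∩ E₁) (S ∩ E₂) :=
      hd.mono Set.inter_subset_right Set.inter_subset_right
    have hsum : (S ∩ E₁).ncard + (S ∩ E₂).ncard = S.ncard := by
      rw [← hsplit, Set.ncard_union_eq hdisj (Set.toFinite _) (Set.toFinite _), hsplit]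
    have hr1 : (S ∩ E₁).ncard ≤ matroidRank M₁ E₁ :=
      ncard_le_mrank (h1.subset Set.inter_subset_left) Set.inter_subset_right
    have hr2 : (S ∩ E₂).ncard ≤ matroidRank M₂ E₂ :=
      ncard_le_mrank (h2.subset Set.inter_subset_left) Set.inter_subset_right
    omega
  · intro h
    obtain ⟨S, _, hScard, hS1, hS2⟩ :=
      edmonds_abstract (Finset.univ : Finset α).card Finset.univ le_rfl
        (fun A : Finset α => matroidRank M₁ ↑A) (fun A : Finset α => matroidRank M₂ ↑A)
        (isRankFn_matroid M₁ hE₁) (isRankFn_matroid M₂ hE₂) (n - 1)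
        (by
          intro A B hu hd
          refine h ↑A ↑B ?_ (Finset.disjoint_coe.mpr hd)
          rw [← Finset.coe_union, hu, Finset.coe_univ])
    refine ⟨↑S, by rw [Set.ncard_coe_finset, hScard], ?_, ?_⟩
    · exact indep_of_mrank_eq (by rw [hS1, Set.ncard_coe_finset, hScard])
    · exact indep_of_mrank_eq (by rw [hS2, Set.ncard_coe_finset, hScard])
end

section
/- Let X be a binomial random variable with parameters n and p, and let μ = np. Then for every 0 < x < 1, P(X ≤ (1−x)μ) ≤ exp(−μ((1−x)log(1−x) + x)) ≤ exp(−x²μ/2). -/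
lemma phi_ge_aux (x : ℝ) (hx0 : 0 ≤ x) (hx1 : x < 1) :
    x ^ 2 / 2 ≤ (1 - x) * Real.log (1 - x) + x := by
  set g : ℝ → ℝ := fun s => (1 - s) * Real.log (1 - s) + s - s ^ 2 / 2 with hg
  have hd : ∀ s ∈ Set.Iio (1:ℝ), HasDerivAt g (-Real.log (1 - s) - s) s := by
    intro s hs
    have h1 : (0:ℝ) < 1 - s := by simp only [Set.mem_Iio] at hs; linarith
    have h2 : HasDerivAt (fun s : ℝ => 1 - s) (-1) s := by
      simpa using (hasDerivAt_id s).const_sub 1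
    have h3 : HasDerivAt (fun s : ℝ => Real.log (1 - s)) (-1 / (1 - s)) s :=
      h2.log h1.ne'
    have h4 : HasDerivAt (fun s : ℝ => (1 - s) * Real.log (1 - s))
        ((-1) * Real.log (1 - s) + (1 - s) * (-1 / (1 - s))) s := h2.mul h3
    have h5 : HasDerivAt (fun s : ℝ => s ^ 2 / 2) s s := by
      have := (hasDerivAt_pow 2 s).div_const 2
      simpa using this
    have h6 := (h4.add (hasDerivAt_id s)).sub h5
    refine h6.congr_deriv ?_
    rw [mul_div_assoc', mul_neg_one, neg_div, div_self h1.ne']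
    ring
  have hmono : MonotoneOn g (Set.Icc 0 x) := by
    apply monotoneOn_of_deriv_nonneg (convex_Icc 0 x)
    · intro s hs
      have hs1 : s < 1 := lt_of_le_of_lt hs.2 hx1
      exact ((hd s hs1).continuousAt).continuousWithinAt
    · intro s hs
      rw [interior_Icc] at hs
      have hs1 : s < 1 := lt_trans hs.2 hx1
      exact ((hd s hs1).differentiableAt).differentiableWithinAt
    · intro s hs
      rw [interior_Icc] at hs
      have hs1 : s < 1 := lt_trans hs.2 hx1
      rw [(hd s hs1).deriv]
      have hlog : Real.log (1 - s) ≤ (1 - s) - 1 :=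
        Real.log_le_sub_one_of_pos (by linarith)
      linarith
  have h0x : g 0 ≤ g x := by
    apply hmono (Set.left_mem_Icc.2 hx0) (Set.right_mem_Icc.2 hx0) hx0
  simp only [hg, Real.log_one, sub_zero, mul_zero, zero_mul] at h0x
  norm_num at h0x
  linarith

/-- Bernstein/Chernoff lower tail for the binomial: with `μ = np`, for
every `0 < x < 1`,
`P(X ≤ (1−x)μ) ≤ exp(−μ((1−x)log(1−x) + x)) ≤ exp(−x²μ/2)`. -/
theorem binomial_lower_tail (n : ℕ) (p : ℝ) (hp0 : 0 ≤ p) (hp1 : p ≤ 1)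
    (x : ℝ) (hx0 : 0 < x) (hx1 : x < 1) :
    (∑ i ∈ Finset.range (n + 1),
        (if (i : ℝ) ≤ (1 - x) * (n * p) then
          (n.choose i : ℝ) * p ^ i * (1 - p) ^ (n - i) else 0))
      ≤ Real.exp (-(n * p) * ((1 - x) * Real.log (1 - x) + x)) ∧
    Real.exp (-(n * p) * ((1 - x) * Real.log (1 - x) + x))
      ≤ Real.exp (-(x ^ 2 * (n * p)) / 2) := by
  have hq0 : (0:ℝ) < 1 - x := by linarith
  have hq1 : (1:ℝ) - x < 1 := by linarith
  have hμ0 : (0:ℝ) ≤ (n : ℝ) * p := by positivity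
  have hlog : Real.log (1 - x) ≤ 0 := Real.log_nonpos (by linarith) (by linarith)
  constructor
  · set a : ℝ := (1 - x) * (n * p) with ha
    have ha0 : 0 ≤ a := by positivity
    set E : ℝ := Real.exp (-Real.log (1 - x) * a) with hE
    have step1 : (∑ i ∈ Finset.range (n + 1),
        (if (i : ℝ) ≤ a then (n.choose i : ℝ) * p ^ i * (1 - p) ^ (n - i) else 0))
        ≤ ∑ i ∈ Finset.range (n + 1),
            E * ((p * (1 - x)) ^ i * (1 - p) ^ (n - i) * (n.choose i : ℝ)) := by
      apply Finset.sum_le_sum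
      intro i _
      have hstuff : (0:ℝ) ≤ (n.choose i : ℝ) * p ^ i * (1 - p) ^ (n - i) := by
        have : (0:ℝ) ≤ 1 - p := by linarith
        positivity
      by_cases h : (i : ℝ) ≤ a
      · rw [if_pos h]
        have hrw : E * ((p * (1 - x)) ^ i * (1 - p) ^ (n - i) * (n.choose i : ℝ))
            = (E * (1 - x) ^ i) * ((n.choose i : ℝ) * p ^ i * (1 - p) ^ (n - i)) := by
          rw [mul_pow]; ring
        rw [hrw]
        have hone : (1:ℝ) ≤ E * (1 - x) ^ i := by
          have h1 : ((1 - x):ℝ) ^ i = Real.exp ((i : ℝ) * Real.log (1 - x)) := by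
            rw [Real.exp_nat_mul, Real.exp_log hq0]
          rw [hE, h1, ← Real.exp_add]
          rw [show -Real.log (1 - x) * a + (i : ℝ) * Real.log (1 - x)
              = Real.log (1 - x) * ((i : ℝ) - a) by ring]
          have : 0 ≤ Real.log (1 - x) * ((i : ℝ) - a) :=
            mul_nonneg_of_nonpos_of_nonpos hlog (by linarith)
          exact Real.one_le_exp this
        exact le_mul_of_one_le_left hstuff hone
      · rw [if_neg h]
        have hE0 : 0 ≤ E := Real.exp_nonneg _
        have : (0:ℝ) ≤ 1 - p := by linarith
        positivity
    have step2 : ∑ i ∈ Finset.range (n + 1),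
        E * ((p * (1 - x)) ^ i * (1 - p) ^ (n - i) * (n.choose i : ℝ))
        = E * (p * (1 - x) + (1 - p)) ^ n := by
      rw [← Finset.mul_sum, add_pow]
    have hpx : p * (1 - x) + (1 - p) = 1 - p * x := by ring
    have step3 : (1 - p * x) ^ n ≤ Real.exp ((n : ℝ) * (-(p * x))) := by
      have h0 : (0:ℝ) ≤ 1 - p * x := by nlinarith
      have h1 : 1 - p * x ≤ Real.exp (-(p * x)) := by
        have := Real.add_one_le_exp (-(p * x)); linarith
      calc (1 - p * x) ^ n ≤ Real.exp (-(p * x)) ^ n := pow_le_pow_left₀ h0 h1 n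
        _ = Real.exp ((n : ℝ) * (-(p * x))) := (Real.exp_nat_mul _ n).symm
    calc (∑ i ∈ Finset.range (n + 1),
        (if (i : ℝ) ≤ a then (n.choose i : ℝ) * p ^ i * (1 - p) ^ (n - i) else 0))
        ≤ E * (p * (1 - x) + (1 - p)) ^ n := by rw [← step2]; exact step1
      _ = E * (1 - p * x) ^ n := by rw [hpx]
      _ ≤ E * Real.exp ((n : ℝ) * (-(p * x))) := by
          apply mul_le_mul_of_nonneg_left step3 (Real.exp_nonneg _)
      _ = Real.exp (-(n * p) * ((1 - x) * Real.log (1 - x) + x)) := by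
          rw [hE, ← Real.exp_add]
          congr 1
          rw [ha]; ring
  · rw [Real.exp_le_exp]
    have hphi := phi_ge_aux x hx0.le hx1
    nlinarith [mul_le_mul_of_nonneg_left hphi hμ0]
end

section
/- Let G(n,p) be the binomial random graph with p ≥ (log n − ω)/n where ω = ω(n) → ∞ with ω = o(log log n). Then the expected number of pairs (J, S) where J ⊆ [n−1] with k ≤ |J| = j ≤ βn/log n and S ⊆ [n] with 2j·log(n/j)/log j ≤ |S| = s ≤ n/2 such that there are no edges of G(n,p) between S and its complement is at most exp(−0.9k·log(n/k))·(1+o(1)) = n^{−0.9k+o(1)} = o(1) for any fixed k ≥ 2 and constant β > 0. In particular, a.a.s. no such pair (J,S) with an empty edge cut exists. -/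
open Real Filter

private lemma choose_le_exp' (n s : ℕ) (hn : 1 ≤ n) (hs : 1 ≤ s) :
    (n.choose s : ℝ) ≤ Real.exp (s * (1 + Real.log n - Real.log s)) := by
  have hsf : (0:ℝ) < s.factorial := by exact_mod_cast s.factorial_pos
  have hspos : (0:ℝ) < s := by exact_mod_cast hs
  have hnpos : (0:ℝ) < n := by exact_mod_cast hn
  have h1 : (n.choose s : ℝ) * s.factorial ≤ (n:ℝ)^s := by
    have h := Nat.descFactorial_le_pow n s
    rw [Nat.descFactorial_eq_factorial_mul_choose] at h
    calc (n.choose s : ℝ) * s.factorial = ((s.factorial * n.choose s : ℕ) : ℝ) := by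
          push_cast; ring
      _ ≤ ((n^s : ℕ) : ℝ) := by exact_mod_cast h
      _ = (n:ℝ)^s := by push_cast; ring
  have h2 : (s:ℝ)^s ≤ Real.exp s * s.factorial := by
    have h := Real.pow_div_factorial_le_exp (x := (s:ℝ)) hspos.le s
    rw [div_le_iff₀ hsf] at h; exact h
  have hss : (0:ℝ) < (s:ℝ)^s := pow_pos hspos s
  have key : (n.choose s : ℝ) ≤ (n:ℝ)^s * Real.exp s / (s:ℝ)^s := by
    rw [le_div_iff₀ hss]
    calc (n.choose s : ℝ) * (s:ℝ)^s ≤ (n.choose s : ℝ) * (Real.exp s * s.factorial) :=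
          mul_le_mul_of_nonneg_left h2 (Nat.cast_nonneg _)
      _ = ((n.choose s : ℝ) * s.factorial) * Real.exp s := by ring
      _ ≤ (n:ℝ)^s * Real.exp s := mul_le_mul_of_nonneg_right h1 (Real.exp_pos _).le
  refine key.trans_eq ?_
  rw [mul_sub, mul_add, mul_one, Real.exp_sub, Real.exp_add, Real.exp_nat_mul, Real.exp_nat_mul,
    Real.exp_log hnpos, Real.exp_log hspos]
  ring

private lemma one_sub_pow_le_exp' (p c : ℝ) (m : ℕ) (hc : c ≤ p) (hp : p ≤ 1) :
    (1 - p) ^ m ≤ Real.exp (-(c * m)) := by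
  have h1 : (1 - p) ≤ Real.exp (-p) := by
    have := Real.add_one_le_exp (-p); linarith
  have h0 : (0:ℝ) ≤ 1 - p := by linarith
  calc (1 - p) ^ m ≤ (Real.exp (-p)) ^ m := pow_le_pow_left₀ h0 h1 m
    _ = Real.exp (-(p * m)) := by rw [← Real.exp_nat_mul]; ring_nf
    _ ≤ Real.exp (-(c * m)) := by
        apply Real.exp_le_exp.mpr
        have : (0:ℝ) ≤ (m:ℝ) := Nat.cast_nonneg m
        nlinarith

private lemma log_le_div_e' {x : ℝ} (hx : 0 < x) : Real.log x ≤ x / Real.exp 1 := by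
  have he : (0:ℝ) < Real.exp 1 := Real.exp_pos 1
  have h := Real.log_le_sub_one_of_pos (x := x / Real.exp 1) (by positivity)
  rw [Real.log_div hx.ne' he.ne', Real.log_exp] at h
  linarith

private lemma mul_log_mono' {a b : ℝ} (ha : 1 ≤ a) (hab : a ≤ b) :
    a * Real.log a ≤ b * Real.log b := by
  have h0 : 0 ≤ Real.log a := Real.log_nonneg ha
  have h1 : Real.log a ≤ Real.log b := Real.log_le_log (by linarith) hab
  nlinarith

private lemma sum_sum_le_bound' (F : ℕ → ℕ → ℝ) (S : Finset ℕ) (T : ℕ → Finset ℕ) (B : ℝ)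
    (hB : 0 ≤ B) (a b : ℕ) (hS : S.card ≤ a) (hT : ∀ j ∈ S, (T j).card ≤ b)
    (h : ∀ j ∈ S, ∀ s ∈ T j, F j s ≤ B) :
    ∑ j ∈ S, ∑ s ∈ T j, F j s ≤ (a : ℝ) * ((b : ℝ) * B) := by
  calc ∑ j ∈ S, ∑ s ∈ T j, F j s ≤ ∑ _j ∈ S, (b : ℝ) * B := by
        apply Finset.sum_le_sum
        intro j hj
        calc ∑ s ∈ T j, F j s ≤ (T j).card • B := Finset.sum_le_card_nsmul _ _ _ (h j hj)
          _ = ((T j).card : ℝ) * B := nsmul_eq_mul _ _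
          _ ≤ (b : ℝ) * B := by
              apply mul_le_mul_of_nonneg_right _ hB
              exact_mod_cast hT j hj
    _ = (S.card : ℝ) * ((b : ℝ) * B) := by rw [Finset.sum_const, nsmul_eq_mul]
    _ ≤ (a : ℝ) * ((b : ℝ) * B) := by
        apply mul_le_mul_of_nonneg_right _ (by positivity)
        exact_mod_cast hS

set_option maxHeartbeats 1000000 in
private lemma star_ineq' (A kR β L W nR x y ℓ lgx : ℝ)
    (hk2 : 2 ≤ kR) (hA : A = 0.9 * kR + 2) (hβ : 0 < β)
    (hc2 : (12*A+40) * L^2 ≤ Real.exp (L/2))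
    (hc3 : 1000*A + 1000*β + 1000 ≤ L)
    (hc4 : 100 ≤ Real.log L)
    (hc5 : Real.log (24*A) ≤ 0.3 * Real.log L)
    (hc6 : 3 * Real.log L + 1 ≤ 0.05 * L)
    (hW0 : 0 ≤ W) (hWL : W ≤ 0.01 * Real.log L)
    (hnL : L ≤ nR) (hLnR : Real.log nR = L)
    (hx2 : 2 ≤ x) (hxk : kR ≤ x) (hxL : x * L ≤ β * nR)
    (hlgx : lgx = Real.log x) (hℓeq : ℓ = L - lgx) (hl20 : 20 ≤ ℓ)
    (hσs : 2*x*ℓ/lgx ≤ y) (hyn2 : 2*y ≤ nR)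
    (hσeL : Real.exp 1 * L ≤ 2*x*ℓ/lgx) :
    x*(1+ℓ) + A*L + y*(1+W) + L*(y*y)/nR ≤ y * Real.log y := by
  have hA0 : (0:ℝ) < A := by rw [hA]; linarith
  have hL1000 : 1000 ≤ L := by nlinarith
  have hL0 : (0:ℝ) < L := by linarith
  have hn0R : (0:ℝ) < nR := by linarith
  have hx0 : (0:ℝ) < x := by linarith
  have hlgx0 : (0:ℝ) < lgx := by rw [hlgx]; exact Real.log_pos (by linarith)
  have hℓ0 : (0:ℝ) < ℓ := by linarith
  have hℓL : ℓ ≤ L := by rw [hℓeq]; linarith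
  have hlgxL : lgx ≤ L := by linarith [hℓeq, hℓ0]
  have he1 : (2.7:ℝ) < Real.exp 1 := by linarith [Real.exp_one_gt_d9]
  have he1L : 2.7 * L ≤ Real.exp 1 * L := mul_le_mul_of_nonneg_right he1.le hL0.le
  set σ : ℝ := 2*x*ℓ/lgx with hσdef
  have hσ0 : (0:ℝ) < σ := by positivity
  have hid : σ * lgx = 2 * (x * ℓ) := by
    rw [hσdef, div_mul_cancel₀ _ hlgx0.ne']; ring
  have hy1 : Real.exp 1 * L ≤ y := le_trans hσeL hσs
  have hy0 : (0:ℝ) < y := lt_of_lt_of_le (by positivity) hy1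
  have hσ1 : (1:ℝ) ≤ σ := by linarith only [hσeL, he1L, hL1000]
  have hlogσ : 1 + Real.log L ≤ Real.log σ := by
    calc 1 + Real.log L = Real.log (Real.exp 1 * L) := by
          rw [Real.log_mul (Real.exp_pos 1).ne' hL0.ne', Real.log_exp]
      _ ≤ Real.log σ := Real.log_le_log (by positivity) hσeL
  have hlogy : 1 + Real.log L ≤ Real.log y :=
    hlogσ.trans (Real.log_le_log hσ0 hσs)
  have hlogy0 : (0:ℝ) < Real.log y := by linarith
  have hyly : σ * Real.log σ ≤ y * Real.log y := mul_log_mono' hσ1 hσs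
  have hxl0 : (0:ℝ) ≤ x * ℓ := by positivity
  have hx105 : x * (1 + ℓ) ≤ 1.05 * (x * ℓ) := by
    linarith only [mul_nonneg hx0.le (show (0:ℝ) ≤ 0.05*ℓ - 1 by linarith only [hl20])]
  have hlogLL : Real.log L ≤ L := by
    have := Real.log_le_sub_one_of_pos hL0; linarith
  have hAy : A * L ≤ 0.01 * (L * y) := by
    have hy2L : 2 * L ≤ y := by linarith only [hy1, he1L, hL0]
    have h1 : (0:ℝ) ≤ 0.01*y - A := by linarith only [hy2L, hc3, hβ, hL1000]
    linarith only [mul_nonneg h1 hL0.le]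
  have hWy : W * y ≤ 0.01 * (L * y) := by
    have hWLL : W ≤ 0.01 * L := by linarith only [hWL, hlogLL, hc4]
    linarith only [mul_le_mul_of_nonneg_right hWLL hy0.le]
  have hy01 : y ≤ 0.01 * (L * y) := by
    linarith only [mul_nonneg (show (0:ℝ) ≤ 0.01*L - 1 by linarith only [hL1000]) hy0.le]
  rcases le_or_gt (y*L*L) nR with hI | hII
  · -- CASE I : y small
    have hyn : L*(y*y)/nR ≤ y := by
      rw [div_le_iff₀ hn0R]
      linarith only [mul_le_mul_of_nonneg_left hI hy0.le,
        mul_nonneg (mul_nonneg (mul_nonneg hy0.le hy0.le) hL0.le)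
          (show (0:ℝ) ≤ L - 1 by linarith only [hL1000])]
    have h05 : 2 + W ≤ 0.05 * Real.log y := by linarith only [hlogy, hWL, hc4]
    have h05y : y * (2 + W) ≤ 0.05 * (y * Real.log y) := by
      linarith only [mul_le_mul_of_nonneg_left h05 hy0.le]
    suffices hsuff : x*(1+ℓ) + A*L ≤ 0.95 * (y * Real.log y) by
      linarith only [hsuff, hyn, h05y]
    rcases le_or_gt lgx (0.3 * Real.log L) with hIa | hIb
    · -- subcase Ia : j small
      have h1 : 6.6 * (x*ℓ) ≤ σ * (1 + Real.log L) := by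
        have key : 6.6 * (x*ℓ) * lgx ≤ σ * (1 + Real.log L) * lgx := by
          rw [mul_right_comm σ, hid]
          linarith only [mul_le_mul_of_nonneg_left hIa (show (0:ℝ) ≤ 6.6*(x*ℓ) by positivity),
            mul_nonneg hxl0 (show (0:ℝ) ≤ Real.log L by linarith only [hc4]), hxl0]
        exact le_of_mul_le_mul_right key hlgx0
      have h2 : σ * (1 + Real.log L) ≤ σ * Real.log σ :=
        mul_le_mul_of_nonneg_left hlogσ hσ0.le
      have hℓ9 : 0.9 * L ≤ ℓ := by rw [hℓeq]; linarith only [hIa, hc6, hL1000]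
      have hAL : A * L ≤ 2.2 * (x*ℓ) := by
        have hkl : kR * (0.9*L) ≤ x * ℓ := mul_le_mul hxk hℓ9 (by positivity) hx0.le
        rw [hA]
        linarith only [hkl, mul_nonneg (show (0:ℝ) ≤ 1.08*kR - 2 by linarith only [hk2]) hL0.le]
      linarith only [h1, h2, hyly, hAL, hx105, hxl0]
    · -- subcase Ib : j large
      have hσexp : Real.log σ = Real.log 2 + Real.log x + Real.log ℓ - Real.log lgx := by
        rw [hσdef, Real.log_div (by positivity) hlgx0.ne',
          Real.log_mul (by positivity) hℓ0.ne',
          Real.log_mul (by norm_num) hx0.ne']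
      have hloglog : Real.log lgx ≤ 0.4 * lgx := by
        have h := log_le_div_e' hlgx0
        have h2 : lgx / Real.exp 1 ≤ 0.4 * lgx := by
          rw [div_le_iff₀ (Real.exp_pos 1)]
          linarith only [mul_le_mul_of_nonneg_left he1.le
            (show (0:ℝ) ≤ 0.4*lgx by linarith only [hlgx0]), hlgx0]
        linarith only [h, h2]
      have hlogσx : 0.6 * lgx ≤ Real.log σ := by
        have h2' : (0:ℝ) ≤ Real.log 2 := Real.log_nonneg one_le_two
        have h3' : (0:ℝ) ≤ Real.log ℓ := Real.log_nonneg (by linarith only [hl20])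
        have h4' : Real.log x = lgx := hlgx.symm
        linarith only [hσexp, hloglog, h2', h3', h4']
      have h12 : 1.2 * (x*ℓ) ≤ σ * Real.log σ := by
        have h := mul_le_mul_of_nonneg_left hlogσx hσ0.le
        linarith only [h, hid]
      have hALb : A * L ≤ 0.09 * (x*ℓ) := by
        rcases le_or_gt (L/2) ℓ with h | h
        · have hx24 : 24 * A ≤ x := by
            have h0 : (0:ℝ) < 24*A := by linarith
            calc 24*A = Real.exp (Real.log (24*A)) := (Real.exp_log h0).symm
              _ ≤ Real.exp (0.3 * Real.log L) := Real.exp_le_exp.mpr hc5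
              _ ≤ Real.exp lgx := Real.exp_le_exp.mpr (by linarith only [hIb])
              _ = x := by rw [hlgx, Real.exp_log hx0]
          linarith only [mul_le_mul hx24 h (by positivity) hx0.le, mul_pos hA0 hL0]
        · have hlx : L/2 < lgx := by rw [hℓeq] at h; linarith only [h]
          have hxbig : (12*A+40) * L^2 ≤ x := by
            calc (12*A+40) * L^2 ≤ Real.exp (L/2) := hc2
              _ ≤ Real.exp lgx := Real.exp_le_exp.mpr hlx.le
              _ = x := by rw [hlgx, Real.exp_log hx0]
          linarith only [mul_le_mul hxbig hl20 (by norm_num) hx0.le,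
            mul_nonneg (mul_nonneg hA0.le hL0.le) (show (0:ℝ) ≤ L - 1 by linarith only [hL1000]),
            mul_nonneg (mul_nonneg hL0.le hL0.le) hA0.le, sq_nonneg L]
      linarith only [h12, hyly, hALb, hx105]
  · -- CASE II : y large
    have hlogy2 : L - 2 * Real.log L ≤ Real.log y := by
      have h1 : nR/(L*L) ≤ y := by
        rw [div_le_iff₀ (by positivity)]
        linarith only [hII]
      have h2 : Real.log (nR/(L*L)) ≤ Real.log y := Real.log_le_log (by positivity) h1
      rw [Real.log_div (by positivity) (by positivity),
        Real.log_mul hL0.ne' hL0.ne', hLnR] at h2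
      linarith only [h2]
    have hlogL004 : y * (2 * Real.log L) ≤ 0.04 * (L * y) := by
      linarith only [mul_le_mul_of_nonneg_left
        (show 2*Real.log L ≤ 0.04*L by linarith only [hc6, hc4]) hy0.le]
    have hylogy : y * (L - 2 * Real.log L) ≤ y * Real.log y :=
      mul_le_mul_of_nonneg_left hlogy2 hy0.le
    rcases le_or_gt (10*y) nR with hIIa | hIIb
    · -- subcase IIa
      have hyyn : L*(y*y)/nR ≤ 0.1 * (L*y) := by
        rw [div_le_iff₀ hn0R]
        linarith only [mul_le_mul_of_nonneg_left hIIa (show (0:ℝ) ≤ 0.1*(L*y) by positivity)]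
      have hσlgx : σ * lgx ≤ y * L :=
        mul_le_mul hσs hlgxL hlgx0.le hy0.le
      have hxyL : x*(1+ℓ) ≤ 0.525 * (y*L) := by linarith only [hx105, hid, hσlgx]
      linarith only [hxyL, hAy, hWy, hy01, hyyn, hylogy, hlogL004, (mul_pos hL0 hy0)]
    · -- subcase IIb
      have hyyn : L*(y*y)/nR ≤ 0.5 * (L*y) := by
        rw [div_le_iff₀ hn0R]
        linarith only [mul_le_mul_of_nonneg_left hyn2 (show (0:ℝ) ≤ 0.5*(L*y) by positivity)]
      have hlogy3 : L - 9 ≤ Real.log y := by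
        have h1 : nR/10 ≤ y := by linarith only [hIIb]
        have h2 : Real.log (nR/10) ≤ Real.log y := Real.log_le_log (by positivity) h1
        rw [Real.log_div (by positivity) (by norm_num), hLnR] at h2
        have hlog10 : Real.log 10 ≤ 9 := by
          linarith only [Real.log_le_sub_one_of_pos (show (0:ℝ) < 10 by norm_num)]
        linarith only [h2, hlog10]
      have hxy : x*(1+ℓ) ≤ 0.03 * (L*y) := by
        have h1 : x*(1+ℓ) ≤ 1.05 * (x*L) := by
          linarith only [mul_nonneg hx0.le (show (0:ℝ) ≤ 0.05*ℓ - 1 by linarith only [hl20]),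
            mul_nonneg hx0.le (show (0:ℝ) ≤ L - ℓ by linarith only [hℓL])]
        have h3 : β*nR ≤ 10*(β*y) := by
          linarith only [mul_le_mul_of_nonneg_left hIIb.le hβ.le]
        have h4 : 10*(β*y) ≤ 0.01 * (L*y) := by
          linarith only [mul_nonneg
            (show (0:ℝ) ≤ 0.001*L - β by linarith only [hc3, hA0, hβ]) hy0.le]
        linarith only [h1, hxL, h3, h4, (mul_pos hL0 hy0)]
      have h9y : 9*y ≤ 0.09 * (L*y) := by
        linarith only [mul_nonneg (show (0:ℝ) ≤ 0.01*L - 1 by linarith only [hL1000]) hy0.le]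
      have hylogy3 : y*(L-9) ≤ y * Real.log y := mul_le_mul_of_nonneg_left hlogy3 hy0.le
      linarith only [hxy, hAy, hWy, hy01, hyyn, hylogy3, h9y, (mul_pos hL0 hy0)]

set_option maxHeartbeats 1000000 in
private lemma per_term' (n j s : ℕ) (A β W pn kR : ℝ) (hβ : 0 < β)
    (hk2 : 2 ≤ kR) (hA : A = 0.9 * kR + 2)
    (hc1 : β * Real.exp 20 ≤ Real.log n)
    (hc2 : (12*A+40) * (Real.log n)^2 ≤ Real.exp (Real.log n / 2))
    (hc3 : 1000*A + 1000*β + 1000 ≤ Real.log n)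
    (hc4 : 100 ≤ Real.log (Real.log n))
    (hc5 : Real.log (24*A) ≤ 0.3 * Real.log (Real.log n))
    (hc6 : 3 * Real.log (Real.log n) + 1 ≤ 0.05 * Real.log n)
    (hW0 : 0 ≤ W) (hWle : W ≤ 0.01 * Real.log (Real.log n))
    (hpl : (Real.log n - W) / n ≤ pn) (hpu : pn ≤ 1)
    (hjk : kR ≤ (j:ℝ)) (hjle : (j:ℝ) ≤ β * n / Real.log n)
    (hs1 : 2 * (j : ℝ) * Real.log ((n : ℝ) / j) / Real.log j ≤ (s:ℝ))
    (hs2 : 2 * s ≤ n) :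
    ((n - 1).choose j : ℝ) * (n.choose s : ℝ) * (1 - pn) ^ (s * (n - s))
      ≤ Real.exp (-(A * Real.log n)) := by
  have hA0 : (0:ℝ) < A := by rw [hA]; linarith
  have hL1000 : 1000 ≤ Real.log n := by linarith
  have hL0 : (0:ℝ) < Real.log n := by linarith
  have he1 : (2.7:ℝ) < Real.exp 1 := by linarith [Real.exp_one_gt_d9]
  have hn0 : (0:ℝ) < (n:ℝ) := by
    rcases le_or_gt ((n:ℝ)) 0 with h | h
    · have : Real.log n = 0 := by
        rcases Nat.eq_zero_or_pos n with h0 | h0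
        · simp [h0]
        · exfalso
          have : (1:ℝ) ≤ (n:ℝ) := by exact_mod_cast h0
          linarith
      linarith
    · exact h
  have hn1 : (1:ℝ) ≤ (n:ℝ) := by
    rcases lt_or_ge ((n:ℝ)) 1 with h | h
    · exfalso
      have : Real.log n < 0 := Real.log_neg hn0 h
      linarith
    · exact h
  have hnL : Real.log n ≤ (n:ℝ) := by
    have := Real.log_le_sub_one_of_pos hn0; linarith
  have hx2 : (2:ℝ) ≤ (j:ℝ) := le_trans hk2 hjk
  have hx0 : (0:ℝ) < (j:ℝ) := by linarith
  have hlgx0 : 0 < Real.log j := Real.log_pos (by linarith)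
  have hxL : (j:ℝ) * Real.log n ≤ β * n := (le_div_iff₀ hL0).mp hjle
  have hℓeq : Real.log ((n:ℝ)/(j:ℝ)) = Real.log n - Real.log j :=
    Real.log_div hn0.ne' hx0.ne'
  have hl20 : 20 ≤ Real.log ((n:ℝ)/(j:ℝ)) := by
    have hLβ : Real.exp 20 ≤ Real.log n / β := (le_div_iff₀ hβ).mpr (by linarith)
    have hdiv : Real.log n / β ≤ (n:ℝ) / (j:ℝ) := by
      rw [div_le_div_iff₀ hβ hx0]; linarith only [hxL]
    calc (20:ℝ) = Real.log (Real.exp 20) := (Real.log_exp 20).symm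
      _ ≤ Real.log (Real.log n / β) := Real.log_le_log (Real.exp_pos _) hLβ
      _ ≤ Real.log ((n:ℝ)/(j:ℝ)) := Real.log_le_log (by positivity) hdiv
  have hℓ0 : (0:ℝ) < Real.log ((n:ℝ)/(j:ℝ)) := by linarith
  have hℓL : Real.log ((n:ℝ)/(j:ℝ)) ≤ Real.log n := by rw [hℓeq]; linarith
  have hex : Real.exp 1 * Real.log j ≤ (j:ℝ) := by
    have h := log_le_div_e' hx0
    rw [le_div_iff₀ (Real.exp_pos 1)] at h
    linarith
  have hσeL : Real.exp 1 * Real.log n ≤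
      2 * (j:ℝ) * Real.log ((n:ℝ)/(j:ℝ)) / Real.log j := by
    rcases le_or_gt (Real.log n / 2) (Real.log ((n:ℝ)/(j:ℝ))) with h | h
    · have h1 : 2 * Real.exp 1 * Real.log ((n:ℝ)/(j:ℝ)) ≤
          2 * (j:ℝ) * Real.log ((n:ℝ)/(j:ℝ)) / Real.log j := by
        rw [le_div_iff₀ hlgx0]
        linarith only [mul_le_mul_of_nonneg_left hex
          (show (0:ℝ) ≤ 2 * Real.log ((n:ℝ)/(j:ℝ)) by linarith)]
      linarith only [h1, mul_nonneg (Real.exp_pos 1).le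
        (show (0:ℝ) ≤ 2 * Real.log ((n:ℝ)/(j:ℝ)) - Real.log n by linarith)]
    · have hlx : Real.log n / 2 < Real.log j := by
        rw [hℓeq] at h; linarith
      have hxbig : (12*A+40) * (Real.log n)^2 ≤ (j:ℝ) := by
        calc (12*A+40) * (Real.log n)^2 ≤ Real.exp (Real.log n/2) := hc2
          _ ≤ Real.exp (Real.log j) := Real.exp_le_exp.mpr hlx.le
          _ = (j:ℝ) := Real.exp_log hx0
      have hlgxL : Real.log j ≤ Real.log n := by rw [hℓeq] at *; linarith
      have h40 : 40 * (j:ℝ) / Real.log n ≤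
          2 * (j:ℝ) * Real.log ((n:ℝ)/(j:ℝ)) / Real.log j := by
        rw [div_le_div_iff₀ hL0 hlgx0]
        linarith only [mul_le_mul_of_nonneg_left hlgxL (by linarith : (0:ℝ) ≤ 40 * (j:ℝ)),
          mul_le_mul_of_nonneg_left hl20 (by positivity : (0:ℝ) ≤ 2 * (j:ℝ) * Real.log n)]
      have hstep : 40 * (12*A+40) * Real.log n ≤ 40 * (j:ℝ) / Real.log n := by
        rw [le_div_iff₀ hL0]
        linarith only [hxbig]
      have he3 : Real.exp 1 ≤ 3 := by linarith [Real.exp_one_lt_d9]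
      linarith only [h40, hstep, mul_le_mul_of_nonneg_right he3 hL0.le,
        mul_nonneg hA0.le hL0.le, hL0]
  have star := star_ineq' A kR β (Real.log n) W ((n:ℝ)) ((j:ℝ)) ((s:ℝ))
    (Real.log ((n:ℝ)/(j:ℝ))) (Real.log j) hk2 hA hβ hc2 hc3 hc4 hc5 hc6 hW0 hWle hnL
    rfl hx2 hjk hxL rfl (by rw [hℓeq]) hl20 hs1
    (by exact_mod_cast hs2) hσeL
  have hy0 : (0:ℝ) < (s:ℝ) := by
    have h1 : Real.exp 1 * Real.log n ≤ (s:ℝ) := le_trans hσeL hs1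
    linarith only [h1, mul_pos (Real.exp_pos 1) hL0]
  have hs1nat : 1 ≤ s := by exact_mod_cast Nat.one_le_iff_ne_zero.mpr (by
    intro h0
    rw [h0] at hy0
    simp at hy0)
  have t1 : ((n - 1).choose j : ℝ) ≤ Real.exp ((j:ℝ) * (1 + Real.log n - Real.log j)) := by
    calc ((n - 1).choose j : ℝ) ≤ (n.choose j : ℝ) := by
          exact_mod_cast Nat.choose_le_choose j (Nat.sub_le n 1)
      _ ≤ Real.exp ((j:ℝ) * (1 + Real.log n - Real.log j)) :=
          choose_le_exp' n j (by exact_mod_cast hn1) (by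
            have : (1:ℝ) ≤ (j:ℝ) := by linarith
            exact_mod_cast this)
  have t2 : (n.choose s : ℝ) ≤ Real.exp ((s:ℝ) * (1 + Real.log n - Real.log s)) :=
    choose_le_exp' n s (by exact_mod_cast hn1) hs1nat
  have t3 : (1 - pn) ^ (s * (n - s)) ≤
      Real.exp (-((Real.log n - W) / n * ((s:ℝ) * ((n:ℝ) - (s:ℝ))))) := by
    have h := one_sub_pow_le_exp' pn ((Real.log n - W) / n) (s * (n - s)) hpl hpu
    have hcast : ((s * (n - s) : ℕ) : ℝ) = (s:ℝ) * ((n:ℝ) - (s:ℝ)) := by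
      have hsn : s ≤ n := by omega
      push_cast [Nat.cast_sub hsn]
      ring
    rw [hcast] at h
    exact h
  have hprod : ((n - 1).choose j : ℝ) * (n.choose s : ℝ) * (1 - pn) ^ (s * (n - s))
      ≤ Real.exp ((j:ℝ) * (1 + Real.log n - Real.log j)) *
        Real.exp ((s:ℝ) * (1 + Real.log n - Real.log s)) *
        Real.exp (-((Real.log n - W) / n * ((s:ℝ) * ((n:ℝ) - (s:ℝ))))) := by
    have h1p : (0:ℝ) ≤ (1 - pn) ^ (s * (n - s)) := pow_nonneg (by linarith) _
    apply mul_le_mul (mul_le_mul t1 t2 (Nat.cast_nonneg _) (Real.exp_pos _).le) t3 h1p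
    positivity
  refine hprod.trans ?_
  rw [← Real.exp_add, ← Real.exp_add]
  apply Real.exp_le_exp.mpr
  have e1 : (j:ℝ) * (1 + Real.log n - Real.log j)
      = (j:ℝ) * (1 + Real.log ((n:ℝ)/(j:ℝ))) := by rw [hℓeq]; ring
  have e2 : (Real.log n - W) / n * ((s:ℝ) * ((n:ℝ) - (s:ℝ)))
      = (Real.log n - W) * (s:ℝ) - (Real.log n - W) * ((s:ℝ) * (s:ℝ)) / n := by
    field_simp
  have e3 : (Real.log n - W) * ((s:ℝ) * (s:ℝ)) / n ≤ Real.log n * ((s:ℝ) * (s:ℝ)) / n := by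
    gcongr
    linarith
  rw [e1, e2]
  linarith only [star, e3]

set_option maxHeartbeats 2000000 in
open Filter in
/-- In `G(n,p)` with `p ≥ (log n − ω)/n`, `ω → ∞`, `ω = o(log log n)`,
the expected number of pairs `(J, S)` with `k ≤ |J| = j ≤ βn/log n`,
`2j·log(n/j)/log j ≤ |S| = s ≤ n/2`, and no edge between `S` and its complement, i.e.
`Σ_j Σ_s C(n−1,j)·C(n,s)·(1−p)^{s(n−s)}`, is at most `n^{−0.9k+o(1)}`; in particular it
tends to `0`. -/
theorem expected_isolated_pairs_small
    (k : ℕ) (hk : 2 ≤ k) (β : ℝ) (hβ : 0 < β) (ω p : ℕ → ℝ)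
    (hω : Tendsto ω atTop atTop)
    (hωo : ω =o[atTop] fun n : ℕ => Real.log (Real.log n))
    (hp : ∀ᶠ n : ℕ in atTop, (Real.log n - ω n) / n ≤ p n ∧ p n ≤ 1) :
    (∀ ε : ℝ, 0 < ε → ∀ᶠ n : ℕ in atTop,
      ∑ j ∈ Finset.Icc k ⌊β * n / Real.log n⌋₊,
        ∑ s ∈ Finset.Icc ⌈2 * (j : ℝ) * Real.log ((n : ℝ) / j) / Real.log j⌉₊ (n / 2),
          ((n - 1).choose j : ℝ) * (n.choose s : ℝ) * (1 - p n) ^ (s * (n - s))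
        ≤ (n : ℝ) ^ (-(0.9 : ℝ) * k + ε)) ∧
    Tendsto (fun n : ℕ =>
      ∑ j ∈ Finset.Icc k ⌊β * n / Real.log n⌋₊,
        ∑ s ∈ Finset.Icc ⌈2 * (j : ℝ) * Real.log ((n : ℝ) / j) / Real.log j⌉₊ (n / 2),
          ((n - 1).choose j : ℝ) * (n.choose s : ℝ) * (1 - p n) ^ (s * (n - s)))
      atTop (nhds 0) := by
  set A : ℝ := 0.9 * k + 2 with hA
  have hk2 : (2:ℝ) ≤ (k:ℝ) := by exact_mod_cast hk
  have hAge : (3.8:ℝ) ≤ A := by rw [hA]; nlinarith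
  have hA0 : (0 : ℝ) < A := lt_of_lt_of_le (by norm_num) hAge
  have hcond : ∀ᶠ x : ℝ in atTop,
      β * Real.exp 20 ≤ x ∧ (12*A+40) * x^2 ≤ Real.exp (x/2) ∧
      1000*A + 1000*β + 1000 ≤ x ∧ 100 ≤ Real.log x ∧
      Real.log (24*A) ≤ 0.3 * Real.log x ∧ 3 * Real.log x + 1 ≤ 0.05 * x := by
    have e1 : ∀ᶠ x : ℝ in atTop, β * Real.exp 20 ≤ x := eventually_ge_atTop _
    have e3 : ∀ᶠ x : ℝ in atTop, 1000*A + 1000*β + 1000 ≤ x := eventually_ge_atTop _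
    have e4 : ∀ᶠ x : ℝ in atTop, 100 ≤ Real.log x :=
      Real.tendsto_log_atTop.eventually (eventually_ge_atTop _)
    have e5 : ∀ᶠ x : ℝ in atTop, Real.log (24*A) ≤ 0.3 * Real.log x := by
      have h := Real.tendsto_log_atTop.eventually (eventually_ge_atTop (Real.log (24*A) / 0.3))
      filter_upwards [h] with x hx
      rw [div_le_iff₀ (by norm_num : (0:ℝ) < 0.3)] at hx
      linarith
    have e6 : ∀ᶠ x : ℝ in atTop, 3 * Real.log x + 1 ≤ 0.05 * x := by
      have h := (Real.isLittleO_log_id_atTop.def (by norm_num : (0:ℝ) < 0.01))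
      filter_upwards [h, eventually_ge_atTop (100:ℝ)] with x hx h100
      have hl : |Real.log x| ≤ 0.01 * |x| := by simpa using hx
      have hx2 : Real.log x ≤ 0.01 * x := by
        rw [abs_of_nonneg (by linarith : (0:ℝ) ≤ x)] at hl
        exact (le_abs_self _).trans hl
      linarith
    have e2 : ∀ᶠ x : ℝ in atTop, (12*A+40) * x^2 ≤ Real.exp (x/2) := by
      have t2 : Tendsto (fun x : ℝ => x / 2) atTop atTop :=
        Tendsto.atTop_div_const (by norm_num) tendsto_id
      have h := ((Real.tendsto_exp_div_pow_atTop 2).comp t2).eventually_ge_atTop (4*(12*A+40))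
      filter_upwards [h, eventually_gt_atTop (0:ℝ)] with x hx hx0
      simp only [Function.comp] at hx
      rw [le_div_iff₀ (by positivity)] at hx
      calc (12*A+40) * x^2 = 4*(12*A+40) * (x/2)^2 := by ring
        _ ≤ Real.exp (x/2) := hx
    filter_upwards [e1, e2, e3, e4, e5, e6] with x h1 h2 h3 h4 h5 h6
    exact ⟨h1, h2, h3, h4, h5, h6⟩
  have hlogn : Tendsto (fun n : ℕ => Real.log n) atTop atTop :=
    Real.tendsto_log_atTop.comp tendsto_natCast_atTop_atTop
  have hωsmall := hωo.def (by norm_num : (0:ℝ) < 0.01)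
  have key : ∀ᶠ n : ℕ in atTop,
      ∑ j ∈ Finset.Icc k ⌊β * n / Real.log n⌋₊,
        ∑ s ∈ Finset.Icc ⌈2 * (j : ℝ) * Real.log ((n : ℝ) / j) / Real.log j⌉₊ (n / 2),
          ((n - 1).choose j : ℝ) * (n.choose s : ℝ) * (1 - p n) ^ (s * (n - s))
        ≤ (n : ℝ) ^ (-(0.9 : ℝ) * (k:ℝ)) := by
    filter_upwards [hp, hω.eventually_ge_atTop 0, hωsmall, hlogn.eventually hcond,
      eventually_ge_atTop 3] with n hpn hW0 hWsm hc hn3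
    obtain ⟨hc1, hc2, hc3, hc4, hc5, hc6⟩ := hc
    have hn0 : (0:ℝ) < n := by
      have : (3:ℝ) ≤ (n:ℝ) := by exact_mod_cast hn3
      linarith
    have hn1 : (1:ℝ) ≤ n := by
      have : (3:ℝ) ≤ (n:ℝ) := by exact_mod_cast hn3
      linarith
    have hL0 : (0:ℝ) < Real.log n := by nlinarith [hc3]
    have hWle : ω n ≤ 0.01 * Real.log (Real.log n) := by
      simp only [Real.norm_eq_abs] at hWsm
      rw [abs_of_nonneg (by linarith : (0:ℝ) ≤ Real.log (Real.log n))] at hWsm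
      exact (le_abs_self _).trans hWsm
    have hterm : ∀ j ∈ Finset.Icc k ⌊β * n / Real.log n⌋₊,
        ∀ s ∈ Finset.Icc ⌈2 * (j : ℝ) * Real.log ((n : ℝ) / j) / Real.log j⌉₊ (n / 2),
        ((n - 1).choose j : ℝ) * (n.choose s : ℝ) * (1 - p n) ^ (s * (n - s))
          ≤ Real.exp (-(A * Real.log n)) := by
      intro j hj s hs
      rw [Finset.mem_Icc] at hj hs
      have hjk : (k:ℝ) ≤ (j:ℝ) := by exact_mod_cast hj.1
      have hjle : (j:ℝ) ≤ β * n / Real.log n := by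
        calc (j:ℝ) ≤ (⌊β * n / Real.log n⌋₊ : ℝ) := by exact_mod_cast hj.2
          _ ≤ β * n / Real.log n := Nat.floor_le (by positivity)
      have hs1 : 2 * (j : ℝ) * Real.log ((n : ℝ) / j) / Real.log j ≤ (s:ℝ) := by
        have := hs.1
        exact_mod_cast Nat.ceil_le.mp this
      have hs2 : 2 * s ≤ n := by
        have := hs.2
        omega
      exact per_term' n j s A β (ω n) (p n) (k:ℝ) hβ hk2 hA hc1 hc2 hc3 hc4 hc5 hc6
        hW0 hWle hpn.1 hpn.2 hjk hjle hs1 hs2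
    have hcards : ∀ j ∈ Finset.Icc k ⌊β * n / Real.log n⌋₊,
        (Finset.Icc ⌈2 * (j : ℝ) * Real.log ((n : ℝ) / j) / Real.log j⌉₊ (n / 2)).card ≤ n := by
      intro j _
      rw [Nat.card_Icc]
      omega
    have hcardj : (Finset.Icc k ⌊β * n / Real.log n⌋₊).card ≤ n := by
      have hfl : (⌊β * n / Real.log n⌋₊ : ℝ) ≤ β * n / Real.log n := Nat.floor_le (by positivity)
      have hβn : β * n / Real.log n ≤ (n:ℝ) / 100 := by
        rw [div_le_div_iff₀ hL0 (by norm_num)]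
        nlinarith [hc3]
      have hn3R : (3:ℝ) ≤ (n:ℝ) := by exact_mod_cast hn3
      have hfn : (⌊β * n / Real.log n⌋₊ : ℝ) + 1 ≤ n := by linarith
      have h2 : ⌊β * n / Real.log n⌋₊ + 1 ≤ n := by exact_mod_cast hfn
      rw [Nat.card_Icc]
      omega
    have hfinal := sum_sum_le_bound'
      (fun j s => ((n - 1).choose j : ℝ) * (n.choose s : ℝ) * (1 - p n) ^ (s * (n - s)))
      (Finset.Icc k ⌊β * n / Real.log n⌋₊)
      (fun j => Finset.Icc ⌈2 * (j : ℝ) * Real.log ((n : ℝ) / j) / Real.log j⌉₊ (n / 2))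
      (Real.exp (-(A * Real.log n))) (Real.exp_pos _).le n n hcardj hcards hterm
    refine hfinal.trans ?_
    rw [Real.rpow_def_of_pos hn0]
    rw [show ((n:ℝ) * ((n:ℝ) * Real.exp (-(A * Real.log n)))) =
      Real.exp (Real.log n) * (Real.exp (Real.log n) * Real.exp (-(A * Real.log n))) by
        rw [Real.exp_log hn0]]
    rw [← Real.exp_add, ← Real.exp_add]
    apply le_of_eq
    congr 1
    rw [hA]; ring
  refine ⟨?_, ?_⟩
  · intro ε hε
    filter_upwards [key, eventually_ge_atTop 1] with n hn h1
    refine hn.trans (Real.rpow_le_rpow_of_exponent_le (by exact_mod_cast h1) (by linarith))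
  · have hzero : Tendsto (fun n : ℕ => (n : ℝ) ^ (-(0.9 : ℝ) * (k:ℝ))) atTop (nhds 0) := by
      have h09 : (0:ℝ) < 0.9 * k := by nlinarith
      have h := (tendsto_rpow_neg_atTop h09).comp tendsto_natCast_atTop_atTop
      have heq : (fun n : ℕ => (n : ℝ) ^ (-(0.9 : ℝ) * (k:ℝ)))
          = (fun x : ℝ => x ^ (-(0.9 * (k:ℝ)))) ∘ (fun n : ℕ => (n:ℝ)) := by
        funext n; rw [Function.comp_apply, neg_mul]
      rw [heq]; exact h
    have hnonneg : ∀ᶠ n : ℕ in atTop, 0 ≤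
        ∑ j ∈ Finset.Icc k ⌊β * n / Real.log n⌋₊,
          ∑ s ∈ Finset.Icc ⌈2 * (j : ℝ) * Real.log ((n : ℝ) / j) / Real.log j⌉₊ (n / 2),
            ((n - 1).choose j : ℝ) * (n.choose s : ℝ) * (1 - p n) ^ (s * (n - s)) := by
      filter_upwards [hp] with n hpn
      apply Finset.sum_nonneg; intro j _
      apply Finset.sum_nonneg; intro s _
      have h1p : (0:ℝ) ≤ 1 - p n := by linarith [hpn.2]
      exact mul_nonneg (mul_nonneg (Nat.cast_nonneg _) (Nat.cast_nonneg _)) (pow_nonneg h1p _)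
    exact squeeze_zero' (g := fun n : ℕ => (n : ℝ) ^ (-(0.9 : ℝ) * (k:ℝ))) hnonneg key hzero
end
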